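/- arXiv:2008.07793 — 5 statements merged into one kernel-verified Lean document; each statement's English description precedes it below -/
import Mathlib

section
/- (Non-preemptive scheduling, Lemma 1.) There exists an optimal solution to SYS that is a greedy non-preemptive allocation: there is a permutation σ of {1,…,N} such that the allocation x̃ defined by x̃_{σ(k),t} := max(0, min(A_k, B_t) − max(A_{k−1}, B_{t−1})), where A_k := Σ_{j=1}^k J_{σ(j)} (A_0 := 0) and B_t := Σ_{s=1}^t M_s (B_0 := 0), is feasible for SYS and achieves the maximum SYS objective over all feasible allocations. -/
open Finset

/- The completion tier `min {t ∈ {1,…,T} : Σ_{s=1}^t g s ≥ Ji}`, taken to be `T+1`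
if no such tier exists. -/
open Classical in
noncomputable def compTier (T : ℕ) (Ji : ℝ) (g : ℕ → ℝ) : ℕ :=
  if ∃ t ∈ Finset.Icc 1 T, Ji ≤ ∑ s ∈ Finset.Icc 1 t, g s then
    sInf {t | t ∈ Finset.Icc 1 T ∧ Ji ≤ ∑ s ∈ Finset.Icc 1 t, g s}
  else T + 1

/-- Feasibility for SYS: nonnegative entries and the capacity constraints. -/
def SYSFeasible (N T : ℕ) (M : ℕ → ℝ) (x : ℕ → ℕ → ℝ) : Prop :=
  (∀ i t, 0 ≤ x i t) ∧ ∀ t ∈ Finset.Icc 1 T, (∑ i ∈ Finset.Icc 1 N, x i t) ≤ M t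

/-- The SYS objective `Σ_{i=1}^N U_{i, T_i(x)}`. -/
noncomputable def SYSObj (N T : ℕ) (J : ℕ → ℝ) (U : ℕ → ℕ → ℝ) (x : ℕ → ℕ → ℝ) : ℝ :=
  ∑ i ∈ Finset.Icc 1 N, U i (compTier T (J i) (x i))

/-- The greedy non-preemptive allocation for the order `σ(1), σ(2), …`:
`x̃_{σ(k),t} = max(0, min(A_k, B_t) − max(A_{k−1}, B_{t−1}))` where
`A_k = Σ_{j=1}^k J_{σ(j)}` and `B_t = Σ_{s=1}^t M_s`. -/
noncomputable def greedyAlloc (J M : ℕ → ℝ) (σ : Equiv.Perm ℕ) (i t : ℕ) : ℝ :=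
  max 0 (min (∑ j ∈ Finset.Icc 1 (σ.symm i), J (σ j)) (∑ s ∈ Finset.Icc 1 t, M s) -
    max (∑ j ∈ Finset.Icc 1 (σ.symm i - 1), J (σ j)) (∑ s ∈ Finset.Icc 1 (t - 1), M s))


lemma clamp_diff (a b c d : ℝ) (hab : a ≤ b) (hcd : c ≤ d) :
    max 0 (min b d - max a c) = min (max d a) b - min (max c a) b := by
  simp only [min_def, max_def]
  split_ifs <;> linarith

lemma tele (f : ℕ → ℝ) (n : ℕ) :
    ∑ s ∈ Finset.Icc 1 n, (f s - f (s - 1)) = f n - f 0 := by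
  induction n with
  | zero => simp
  | succ n ih =>
    rw [Finset.sum_Icc_succ_top (by omega : 1 ≤ n + 1), ih]
    simp only [Nat.add_sub_cancel]; ring

lemma tele' (g : ℕ → ℝ) (f : ℕ → ℝ) (n : ℕ)
    (h : ∀ s ∈ Finset.Icc 1 n, g s = f s - f (s - 1)) :
    ∑ s ∈ Finset.Icc 1 n, g s = f n - f 0 := by
  rw [Finset.sum_congr rfl h, tele]

lemma compTier_le {T t₀ : ℕ} {Ji : ℝ} {g : ℕ → ℝ} (h : t₀ ∈ Finset.Icc 1 T)
    (hle : Ji ≤ ∑ s ∈ Finset.Icc 1 t₀, g s) : compTier T Ji g ≤ t₀ := by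
  rw [compTier, if_pos ⟨t₀, h, hle⟩]
  exact Nat.sInf_le ⟨h, hle⟩

lemma compTier_mem (T : ℕ) (Ji : ℝ) (g : ℕ → ℝ) :
    compTier T Ji g ∈ Finset.Icc 1 (T + 1) := by
  rw [compTier]
  split_ifs with h
  · obtain ⟨t, ht, hle⟩ := h
    have hmem := Nat.sInf_mem (⟨t, ht, hle⟩ :
      {t | t ∈ Finset.Icc 1 T ∧ Ji ≤ ∑ s ∈ Finset.Icc 1 t, g s}.Nonempty)
    simp only [Finset.mem_Icc, Set.mem_setOf_eq] at hmem ⊢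
    omega
  · simp

lemma compTier_spec {T : ℕ} {Ji : ℝ} {g : ℕ → ℝ} (h : compTier T Ji g ≤ T) :
    compTier T Ji g ∈ Finset.Icc 1 T ∧
      Ji ≤ ∑ s ∈ Finset.Icc 1 (compTier T Ji g), g s := by
  rw [compTier] at h ⊢
  split_ifs at h ⊢ with hex
  · obtain ⟨t, ht, hle⟩ := hex
    exact Nat.sInf_mem (⟨t, ht, hle⟩ :
      {t | t ∈ Finset.Icc 1 T ∧ Ji ≤ ∑ s ∈ Finset.Icc 1 t, g s}.Nonempty)
  · omega

def finIccEquiv (N : ℕ) : Fin N ≃ {k : ℕ // k ∈ Finset.Icc 1 N} where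
  toFun j := ⟨j.1 + 1, by have := j.2; simp only [Finset.mem_Icc]; omega⟩
  invFun k := ⟨k.1 - 1, by have := k.2; simp only [Finset.mem_Icc] at this; omega⟩
  left_inv j := by ext; simp
  right_inv k := by
    have := k.2; simp only [Finset.mem_Icc] at this
    ext; simp; omega

def extPerm (N : ℕ) (π : Equiv.Perm (Fin N)) : Equiv.Perm ℕ :=
  π.extendDomain (finIccEquiv N)

lemma extPerm_apply (N : ℕ) (π : Equiv.Perm (Fin N)) {i : ℕ} (hi : i ∈ Finset.Icc 1 N) :
    extPerm N π i = (π ((finIccEquiv N).symm ⟨i, hi⟩)).1 + 1 := by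
  rw [extPerm, Equiv.Perm.extendDomain_apply_subtype _ _ hi]
  rfl

lemma extPerm_mem (N : ℕ) (π : Equiv.Perm (Fin N)) {i : ℕ} (hi : i ∈ Finset.Icc 1 N) :
    extPerm N π i ∈ Finset.Icc 1 N := by
  rw [extPerm_apply N π hi]
  have := (π ((finIccEquiv N).symm ⟨i, hi⟩)).2
  simp only [Finset.mem_Icc]; omega

lemma extPerm_symm (N : ℕ) (π : Equiv.Perm (Fin N)) :
    (extPerm N π).symm = extPerm N π⁻¹ := by
  rw [extPerm, extPerm, ← Equiv.Perm.extendDomain_inv]; rfl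

lemma exists_sorted (N : ℕ) (c : ℕ → ℕ) :
    ∃ π : Equiv.Perm (Fin N), ∀ j k, j ∈ Finset.Icc 1 N → k ∈ Finset.Icc 1 N → j ≤ k →
      c (extPerm N π j) ≤ c (extPerm N π k) := by
  set f : Fin N → ℕ := fun j => c (j.1 + 1) with hf
  refine ⟨Tuple.sort f, ?_⟩
  intro j k hj hk hjk
  have hj' := hj; have hk' := hk
  simp only [Finset.mem_Icc] at hj' hk'
  rw [extPerm_apply N _ hj, extPerm_apply N _ hk]
  have hle : ((finIccEquiv N).symm ⟨j, hj⟩ : Fin N) ≤ (finIccEquiv N).symm ⟨k, hk⟩ := by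
    rw [Fin.le_def]
    show j - 1 ≤ k - 1
    omega
  exact Tuple.monotone_sort f hle

lemma sum_perm_symm {S : Finset ℕ} {σ : Equiv.Perm ℕ}
    (h1 : ∀ i ∈ S, σ i ∈ S) (h2 : ∀ i ∈ S, σ.symm i ∈ S) (g : ℕ → ℝ) :
    ∑ i ∈ S, g (σ.symm i) = ∑ k ∈ S, g k := by
  refine Finset.sum_equiv σ.symm (fun i => ⟨fun h => h2 i h, fun h => ?_⟩) (fun i _ => rfl)
  have := h1 _ h
  simpa using this

lemma sum_split (f : ℕ → ℝ) {k : ℕ} (hk : 1 ≤ k) :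
    ∑ j ∈ Finset.Icc 1 k, f j = (∑ j ∈ Finset.Icc 1 (k - 1), f j) + f k := by
  have h : k - 1 + 1 = k := by omega
  rw [← h, Finset.sum_Icc_succ_top (by omega), h]

lemma greedy_row_sum (N T : ℕ) (J M : ℕ → ℝ) (σ : Equiv.Perm ℕ)
    (hJ : ∀ i ∈ Finset.Icc 1 N, 0 < J i) (hM : ∀ t ∈ Finset.Icc 1 T, 0 < M t)
    (h1 : ∀ i ∈ Finset.Icc 1 N, σ i ∈ Finset.Icc 1 N)
    {i : ℕ} (h2i : σ.symm i ∈ Finset.Icc 1 N)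
    {t : ℕ} (ht : t ≤ T) :
    ∑ s ∈ Finset.Icc 1 t, greedyAlloc J M σ i s =
      min (max (∑ s ∈ Finset.Icc 1 t, M s) (∑ j ∈ Finset.Icc 1 (σ.symm i - 1), J (σ j)))
        (∑ j ∈ Finset.Icc 1 (σ.symm i), J (σ j)) -
      ∑ j ∈ Finset.Icc 1 (σ.symm i - 1), J (σ j) := by
  set k := σ.symm i with hkdef
  set a := ∑ j ∈ Finset.Icc 1 (k - 1), J (σ j) with hadef
  set b := ∑ j ∈ Finset.Icc 1 k, J (σ j) with hbdef
  set B : ℕ → ℝ := fun s => ∑ s' ∈ Finset.Icc 1 s, M s' with hBdef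
  simp only [Finset.mem_Icc] at h2i
  have hb : b = a + J (σ k) := sum_split _ (by omega)
  have hab : a ≤ b := by
    have : 0 < J (σ k) := hJ _ (h1 k (by simp only [Finset.mem_Icc]; omega))
    linarith
  have ha0 : 0 ≤ a := by
    apply Finset.sum_nonneg
    intro j hj
    simp only [Finset.mem_Icc] at hj
    exact le_of_lt (hJ _ (h1 j (by simp only [Finset.mem_Icc]; omega)))
  have key : ∀ s ∈ Finset.Icc 1 t, greedyAlloc J M σ i s =
      (fun s => min (max (B s) a) b) s - (fun s => min (max (B s) a) b) (s - 1) := by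
    intro s hs
    simp only [Finset.mem_Icc] at hs
    have hBs : B (s - 1) ≤ B s := by
      have h' : B s = B (s - 1) + M s := sum_split _ (by omega)
      have : 0 < M s := hM s (by simp only [Finset.mem_Icc]; omega)
      linarith
    show greedyAlloc J M σ i s = min (max (B s) a) b - min (max (B (s-1)) a) b
    rw [greedyAlloc]
    exact clamp_diff a b (B (s - 1)) (B s) hab hBs
  rw [tele' _ _ t key]
  have hB0 : B 0 = 0 := by simp [hBdef]
  rw [hB0]
  rw [max_eq_right ha0, min_eq_left hab]

lemma greedy_feasible (N T : ℕ) (J M : ℕ → ℝ) (σ : Equiv.Perm ℕ)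
    (hJ : ∀ i ∈ Finset.Icc 1 N, 0 < J i) (hM : ∀ t ∈ Finset.Icc 1 T, 0 < M t)
    (h1 : ∀ i ∈ Finset.Icc 1 N, σ i ∈ Finset.Icc 1 N)
    (h2 : ∀ i ∈ Finset.Icc 1 N, σ.symm i ∈ Finset.Icc 1 N) :
    (∀ i t, 0 ≤ greedyAlloc J M σ i t) ∧
      ∀ t ∈ Finset.Icc 1 T, (∑ i ∈ Finset.Icc 1 N, greedyAlloc J M σ i t) ≤ M t := by
  constructor
  · intro i t; exact le_max_left _ _
  · intro t ht
    simp only [Finset.mem_Icc] at ht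
    set A : ℕ → ℝ := fun k => ∑ j ∈ Finset.Icc 1 k, J (σ j) with hAdef
    set B : ℕ → ℝ := fun s => ∑ s' ∈ Finset.Icc 1 s, M s' with hBdef
    have hBt : B t = B (t - 1) + M t := sum_split _ (by omega)
    have hBle : B (t - 1) ≤ B t := by
      have : 0 < M t := hM t (by simp only [Finset.mem_Icc]; omega)
      linarith
    have hB0 : 0 ≤ B (t - 1) := by
      apply Finset.sum_nonneg
      intro s hs
      simp only [Finset.mem_Icc] at hs
      exact le_of_lt (hM s (by simp only [Finset.mem_Icc]; omega))
    have hre : ∑ i ∈ Finset.Icc 1 N, greedyAlloc J M σ i t =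
        ∑ k ∈ Finset.Icc 1 N, max 0 (min (A k) (B t) - max (A (k - 1)) (B (t - 1))) := by
      refine Finset.sum_equiv σ.symm (fun i => ⟨fun h => h2 i h, fun h => ?_⟩)
        (fun i _ => rfl)
      have := h1 _ h; simpa using this
    rw [hre]
    have key : ∀ k ∈ Finset.Icc 1 N, max 0 (min (A k) (B t) - max (A (k - 1)) (B (t - 1))) =
        min (max (A k) (B (t - 1))) (B t) - min (max (A (k - 1)) (B (t - 1))) (B t) := by
      intro k hk
      simp only [Finset.mem_Icc] at hk
      have hAk : A k = A (k - 1) + J (σ k) := sum_split _ (by omega)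
      have hAle : A (k - 1) ≤ A k := by
        have : 0 < J (σ k) := hJ _ (h1 k (by simp only [Finset.mem_Icc]; omega))
        linarith
      simp only [min_def, max_def]
      split_ifs <;> linarith
    have h3 : ∑ k ∈ Finset.Icc 1 N, (min (max (A k) (B (t - 1))) (B t) -
        min (max (A (k - 1)) (B (t - 1))) (B t)) =
        min (max (A N) (B (t - 1))) (B t) - min (max (A 0) (B (t - 1))) (B t) :=
      tele (fun k => min (max (A k) (B (t - 1))) (B t)) N
    rw [Finset.sum_congr rfl key, h3]
    have hA0 : A 0 = 0 := by simp [hAdef]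
    rw [hA0, max_eq_right hB0, min_eq_left hBle]
    have : min (max (A N) (B (t - 1))) (B t) ≤ B t := min_le_right _ _
    linarith

lemma greedy_compare (N T : ℕ) (J M : ℕ → ℝ) (U : ℕ → ℕ → ℝ) (x : ℕ → ℕ → ℝ)
    (hJ : ∀ i ∈ Finset.Icc 1 N, 0 < J i)
    (hM : ∀ t ∈ Finset.Icc 1 T, 0 < M t)
    (hUnn : ∀ i ∈ Finset.Icc 1 N, ∀ t ∈ Finset.Icc 1 T, 0 ≤ U i t)
    (hUmono : ∀ i ∈ Finset.Icc 1 N, ∀ t ∈ Finset.Icc 1 T, ∀ t', t ≤ t' → t' ≤ T →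
      U i t' ≤ U i t)
    (hU0 : ∀ i ∈ Finset.Icc 1 N, U i (T + 1) = 0)
    (σ : Equiv.Perm ℕ)
    (hσ1 : ∀ i ∈ Finset.Icc 1 N, σ i ∈ Finset.Icc 1 N)
    (hσ2 : ∀ i ∈ Finset.Icc 1 N, σ.symm i ∈ Finset.Icc 1 N)
    (hsorted : ∀ j k, j ∈ Finset.Icc 1 N → k ∈ Finset.Icc 1 N → j ≤ k →
      compTier T (J (σ j)) (x (σ j)) ≤ compTier T (J (σ k)) (x (σ k)))
    (hxnn : ∀ i t, 0 ≤ x i t)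
    (hxcap : ∀ t ∈ Finset.Icc 1 T, (∑ i ∈ Finset.Icc 1 N, x i t) ≤ M t) :
    SYSObj N T J U x ≤ SYSObj N T J U (greedyAlloc J M σ) := by
  unfold SYSObj
  apply Finset.sum_le_sum
  intro i hi
  have hgtm := compTier_mem T (J i) (greedyAlloc J M σ i)
  simp only [Finset.mem_Icc] at hgtm
  by_cases hci : compTier T (J i) (x i) ≤ T
  · -- user i finishes under x at tier t₀ := compTier T (J i) (x i) ≤ T
    have hk : σ.symm i ∈ Finset.Icc 1 N := hσ2 i hi
    have hkmem := hk
    simp only [Finset.mem_Icc] at hkmem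
    have hki : σ (σ.symm i) = i := σ.apply_symm_apply i
    have hciTmem := (compTier_spec hci).1
    simp only [Finset.mem_Icc] at hciTmem
    -- A_k ≤ B_{t₀}
    have hA : ∑ j ∈ Finset.Icc 1 (σ.symm i), J (σ j) ≤
        ∑ s ∈ Finset.Icc 1 (compTier T (J i) (x i)), M s := by
      calc ∑ j ∈ Finset.Icc 1 (σ.symm i), J (σ j)
          ≤ ∑ j ∈ Finset.Icc 1 (σ.symm i),
              ∑ s ∈ Finset.Icc 1 (compTier T (J i) (x i)), x (σ j) s := by
            apply Finset.sum_le_sum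
            intro j hj
            simp only [Finset.mem_Icc] at hj
            have hjN : j ∈ Finset.Icc 1 N := by simp only [Finset.mem_Icc]; omega
            have hcj : compTier T (J (σ j)) (x (σ j)) ≤ compTier T (J (σ (σ.symm i))) (x (σ (σ.symm i))) :=
              hsorted j (σ.symm i) hjN hk hj.2
            rw [hki] at hcj
            have hcjT : compTier T (J (σ j)) (x (σ j)) ≤ T := le_trans hcj hci
            obtain ⟨hmem, hsum⟩ := compTier_spec hcjT
            refine le_trans hsum (Finset.sum_le_sum_of_subset_of_nonneg ?_ ?_)
            · exact Finset.Icc_subset_Icc_right hcj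
            · intro s _ _; exact hxnn _ _
        _ = ∑ s ∈ Finset.Icc 1 (compTier T (J i) (x i)),
              ∑ j ∈ Finset.Icc 1 (σ.symm i), x (σ j) s := Finset.sum_comm
        _ ≤ ∑ s ∈ Finset.Icc 1 (compTier T (J i) (x i)),
              ∑ i' ∈ Finset.Icc 1 N, x i' s := by
            apply Finset.sum_le_sum
            intro s _
            have himg : ∑ i' ∈ (Finset.Icc 1 (σ.symm i)).image σ, x i' s
                = ∑ j ∈ Finset.Icc 1 (σ.symm i), x (σ j) s :=
              Finset.sum_image (fun a _ b _ h => σ.injective h)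
            rw [← himg]
            refine Finset.sum_le_sum_of_subset_of_nonneg ?_ (fun i' _ _ => hxnn _ _)
            intro i' hi'
            simp only [Finset.mem_image] at hi'
            obtain ⟨j, hj, rfl⟩ := hi'
            simp only [Finset.mem_Icc] at hj
            exact hσ1 j (by simp only [Finset.mem_Icc]; omega)
        _ ≤ ∑ s ∈ Finset.Icc 1 (compTier T (J i) (x i)), M s := by
            apply Finset.sum_le_sum
            intro s hs
            simp only [Finset.mem_Icc] at hs
            exact hxcap s (by simp only [Finset.mem_Icc]; omega)
    -- greedy finishes user i by tier t₀
    have hrow := greedy_row_sum N T J M σ hJ hM hσ1 hk (t := compTier T (J i) (x i)) hci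
    have hb : ∑ j ∈ Finset.Icc 1 (σ.symm i), J (σ j) =
        (∑ j ∈ Finset.Icc 1 (σ.symm i - 1), J (σ j)) + J (σ (σ.symm i)) :=
      sum_split _ (by omega)
    rw [hki] at hb
    have hJsum : J i ≤ ∑ s ∈ Finset.Icc 1 (compTier T (J i) (x i)), greedyAlloc J M σ i s := by
      rw [hrow]
      have hmin : ∑ j ∈ Finset.Icc 1 (σ.symm i), J (σ j) ≤
          min (max (∑ s ∈ Finset.Icc 1 (compTier T (J i) (x i)), M s)
            (∑ j ∈ Finset.Icc 1 (σ.symm i - 1), J (σ j)))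
            (∑ j ∈ Finset.Icc 1 (σ.symm i), J (σ j)) :=
        le_min (le_trans hA (le_max_left _ _)) le_rfl
      linarith
    have hgt_le : compTier T (J i) (greedyAlloc J M σ i) ≤ compTier T (J i) (x i) :=
      compTier_le (by simp only [Finset.mem_Icc]; omega) hJsum
    exact hUmono i hi _ (by simp only [Finset.mem_Icc]; omega) _ hgt_le hci
  · -- user i does not finish under x: U i (T+1) = 0 ≤ U i (greedy tier)
    have hcm := compTier_mem T (J i) (x i)
    simp only [Finset.mem_Icc] at hcm
    have : compTier T (J i) (x i) = T + 1 := by omega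
    rw [this, hU0 i hi]
    by_cases hgT : compTier T (J i) (greedyAlloc J M σ i) ≤ T
    · exact hUnn i hi _ (by simp only [Finset.mem_Icc]; omega)
    · have : compTier T (J i) (greedyAlloc J M σ i) = T + 1 := by omega
      rw [this, hU0 i hi]

/-- Lemma 1, non-preemptive scheduling: there is a permutation of the users
whose greedy non-preemptive allocation is feasible for SYS and maximizes the SYS
objective over all feasible allocations. -/
theorem stmt1
    (N T : ℕ) (J M : ℕ → ℝ) (U : ℕ → ℕ → ℝ)
    (hJ : ∀ i ∈ Finset.Icc 1 N, 0 < J i)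
    (hM : ∀ t ∈ Finset.Icc 1 T, 0 < M t)
    (hUnn : ∀ i ∈ Finset.Icc 1 N, ∀ t ∈ Finset.Icc 1 T, 0 ≤ U i t)
    (hUmono : ∀ i ∈ Finset.Icc 1 N, ∀ t ∈ Finset.Icc 1 T, ∀ t', t ≤ t' → t' ≤ T →
      U i t' ≤ U i t)
    (hU0 : ∀ i ∈ Finset.Icc 1 N, U i (T + 1) = 0) :
    ∃ σ : Equiv.Perm ℕ, (∀ i ∈ Finset.Icc 1 N, σ i ∈ Finset.Icc 1 N) ∧
      SYSFeasible N T M (greedyAlloc J M σ) ∧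
      ∀ x, SYSFeasible N T M x →
        SYSObj N T J U x ≤ SYSObj N T J U (greedyAlloc J M σ) := by
  classical
  obtain ⟨πopt, hπopt⟩ := Finite.exists_max
    (fun π : Equiv.Perm (Fin N) => SYSObj N T J U (greedyAlloc J M (extPerm N π)))
  have hmem1 : ∀ (π : Equiv.Perm (Fin N)), ∀ i ∈ Finset.Icc 1 N,
      extPerm N π i ∈ Finset.Icc 1 N := fun π i hi => extPerm_mem N π hi
  have hmem2 : ∀ (π : Equiv.Perm (Fin N)), ∀ i ∈ Finset.Icc 1 N,
      (extPerm N π).symm i ∈ Finset.Icc 1 N := by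
    intro π i hi
    rw [extPerm_symm]
    exact extPerm_mem N _ hi
  refine ⟨extPerm N πopt, hmem1 πopt, ?_, ?_⟩
  · exact greedy_feasible N T J M _ hJ hM (hmem1 πopt) (hmem2 πopt)
  · intro x hx
    obtain ⟨hxnn, hxcap⟩ := hx
    obtain ⟨π, hπ⟩ := exists_sorted N (fun i => compTier T (J i) (x i))
    have h1 : SYSObj N T J U x ≤ SYSObj N T J U (greedyAlloc J M (extPerm N π)) := by
      refine greedy_compare N T J M U x hJ hM hUnn hUmono hU0 (extPerm N π)
        (hmem1 π) (hmem2 π) ?_ hxnn hxcap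
      intro j k hj hk hjk
      have := hπ j k hj hk hjk
      have hcj : compTier T (J (extPerm N π j)) (x (extPerm N π j)) ≤
          compTier T (J (extPerm N π k)) (x (extPerm N π k)) := this
      exact hcj
    exact le_trans h1 (hπopt π)
end

section
/- The optimal value of SYS equals the optimal value of SYS-ILP. Specifically: (a) for every allocation x feasible for SYS, setting y_{i,t} := 1 if Σ_{s=1}^t x_{i,s} ≥ J_i and y_{i,t} := 0 otherwise yields a feasible solution (x, y) of SYS-ILP whose SYS-ILP objective equals Σ_{i=1}^N U_{i,T_i(x)}; and (b) for every feasible solution (x, y) of SYS-ILP, the SYS objective of x satisfies Σ_{i=1}^N U_{i,T_i(x)} ≥ Σ_{t=1}^T Σ_{i=1}^N u_{i,t} y_{i,t}. -/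
open Finset

/-- Feasibility for SYS-ILP: `x ≥ 0`, `y` binary, `y_{i,t} ≤ (Σ_{s=1}^t x_{i,s})/J_i`,
and the capacity constraints. -/
def ILPFeasible (N T : ℕ) (J M : ℕ → ℝ) (x y : ℕ → ℕ → ℝ) : Prop :=
  (∀ i t, 0 ≤ x i t) ∧
  (∀ i ∈ Finset.Icc 1 N, ∀ t ∈ Finset.Icc 1 T, y i t = 0 ∨ y i t = 1) ∧
  (∀ i ∈ Finset.Icc 1 N, ∀ t ∈ Finset.Icc 1 T,
    y i t ≤ (∑ s ∈ Finset.Icc 1 t, x i s) / J i) ∧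
  (∀ t ∈ Finset.Icc 1 T, (∑ i ∈ Finset.Icc 1 N, x i t) ≤ M t)

/-- The SYS-ILP objective `Σ_{t=1}^T Σ_{i=1}^N u_{i,t} y_{i,t}` with
`u_{i,t} = U_{i,t} − U_{i,t+1}`. -/
noncomputable def ILPObj (N T : ℕ) (U : ℕ → ℕ → ℝ) (y : ℕ → ℕ → ℝ) : ℝ :=
  ∑ t ∈ Finset.Icc 1 T, ∑ i ∈ Finset.Icc 1 N, (U i t - U i (t + 1)) * y i t

lemma telescopeAux (f : ℕ → ℝ) : ∀ (a b : ℕ), a ≤ b + 1 →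
    ∑ t ∈ Finset.Icc a b, (f t - f (t+1)) = f a - f (b+1) := by
  intro a b
  induction b with
  | zero =>
    intro h
    interval_cases a
    · simp
    · simp
  | succ b ih =>
    intro h
    rcases Nat.lt_or_ge (b+1) a with h1 | h1
    · have ha : a = b + 2 := by omega
      subst ha
      rw [Finset.Icc_eq_empty (by omega)]
      simp
    · rw [Finset.sum_Icc_succ_top h1, ih (by omega)]
      ring

lemma compTierProps (T : ℕ) (Ji : ℝ) (g : ℕ → ℝ) (hg : ∀ s, 0 ≤ g s) :
    1 ≤ compTier T Ji g ∧ compTier T Ji g ≤ T + 1 ∧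
    (∀ t ∈ Finset.Icc 1 T, ((Ji ≤ ∑ s ∈ Finset.Icc 1 t, g s) ↔ compTier T Ji g ≤ t)) := by
  have hSmono : ∀ a b : ℕ, a ≤ b →
      (∑ s ∈ Finset.Icc 1 a, g s) ≤ ∑ s ∈ Finset.Icc 1 b, g s := by
    intro a b hab
    exact Finset.sum_le_sum_of_subset_of_nonneg
      (Finset.Icc_subset_Icc_right hab) (fun s _ _ => hg s)
  unfold compTier
  split_ifs with h
  · obtain ⟨t0, ht0, hJt0⟩ := h
    have hne : {t | t ∈ Finset.Icc 1 T ∧ Ji ≤ ∑ s ∈ Finset.Icc 1 t, g s}.Nonempty :=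
      ⟨t0, ht0, hJt0⟩
    obtain ⟨hmem1, hmem2⟩ := Nat.sInf_mem hne
    rw [Finset.mem_Icc] at hmem1
    refine ⟨hmem1.1, by omega, ?_⟩
    intro t ht
    constructor
    · intro hle
      exact Nat.sInf_le ⟨ht, hle⟩
    · intro hle
      exact le_trans hmem2 (hSmono _ _ hle)
  · push_neg at h
    refine ⟨by omega, le_refl _, ?_⟩
    intro t ht
    have ht' := Finset.mem_Icc.mp ht
    constructor
    · intro hle; exact absurd hle (not_le.mpr (h t ht))
    · omega

lemma keyEq (T : ℕ) (Ji : ℝ) (g : ℕ → ℝ) (hg : ∀ s, 0 ≤ g s) (V : ℕ → ℝ)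
    (hV0 : V (T+1) = 0) :
    ∑ t ∈ Finset.Icc 1 T, (V t - V (t+1)) *
      (if Ji ≤ ∑ s ∈ Finset.Icc 1 t, g s then (1:ℝ) else 0)
      = V (compTier T Ji g) := by
  classical
  obtain ⟨hτ1, hτ2, hiff⟩ := compTierProps T Ji g hg
  set τ := compTier T Ji g with hτ
  have hstep : ∀ t ∈ Finset.Icc 1 T,
      (V t - V (t+1)) * (if Ji ≤ ∑ s ∈ Finset.Icc 1 t, g s then (1:ℝ) else 0)
      = if τ ≤ t then (V t - V (t+1)) else 0 := by
    intro t ht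
    rw [mul_ite, mul_one, mul_zero, if_congr (hiff t ht) rfl rfl]
  rw [Finset.sum_congr rfl hstep, ← Finset.sum_filter]
  have hfil : (Finset.Icc 1 T).filter (fun t => τ ≤ t) = Finset.Icc τ T := by
    ext t
    simp only [Finset.mem_filter, Finset.mem_Icc]
    omega
  rw [hfil, telescopeAux V τ T hτ2, hV0, sub_zero]

lemma keyLe (T : ℕ) (Ji : ℝ) (hJi : 0 < Ji) (g : ℕ → ℝ) (hg : ∀ s, 0 ≤ g s)
    (V : ℕ → ℝ) (hV0 : V (T+1) = 0)
    (hVmono : ∀ t ∈ Finset.Icc 1 T, V (t+1) ≤ V t)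
    (y : ℕ → ℝ) (hy01 : ∀ t ∈ Finset.Icc 1 T, y t = 0 ∨ y t = 1)
    (hyle : ∀ t ∈ Finset.Icc 1 T, y t ≤ (∑ s ∈ Finset.Icc 1 t, g s) / Ji) :
    ∑ t ∈ Finset.Icc 1 T, (V t - V (t+1)) * y t ≤ V (compTier T Ji g) := by
  rw [← keyEq T Ji g hg V hV0]
  apply Finset.sum_le_sum
  intro t ht
  have hu : 0 ≤ V t - V (t+1) := by linarith [hVmono t ht]
  rcases hy01 t ht with h0 | h1
  · rw [h0, mul_zero]
    split_ifs <;> simp [hu]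
  · rw [h1, mul_one]
    have h2 : Ji ≤ ∑ s ∈ Finset.Icc 1 t, g s := by
      have := hyle t ht
      rw [h1, one_le_div hJi] at this
      exact this
    rw [if_pos h2, mul_one]

/-- SYS and SYS-ILP are equivalent.
(a) For SYS-feasible `x` the indicator `y` of job completion is SYS-ILP feasible and
has ILP objective equal to the SYS objective of `x`.
(b) For any SYS-ILP-feasible `(x,y)` the SYS objective of `x` dominates the ILP
objective of `y`. -/
theorem stmt2
    (N T : ℕ) (J M : ℕ → ℝ) (U : ℕ → ℕ → ℝ)
    (hJ : ∀ i ∈ Finset.Icc 1 N, 0 < J i)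
    (hM : ∀ t ∈ Finset.Icc 1 T, 0 < M t)
    (hUnn : ∀ i ∈ Finset.Icc 1 N, ∀ t ∈ Finset.Icc 1 T, 0 ≤ U i t)
    (hUmono : ∀ i ∈ Finset.Icc 1 N, ∀ t ∈ Finset.Icc 1 T, ∀ t', t ≤ t' → t' ≤ T →
      U i t' ≤ U i t)
    (hU0 : ∀ i ∈ Finset.Icc 1 N, U i (T + 1) = 0) :
    (∀ x : ℕ → ℕ → ℝ, SYSFeasible N T M x →
      ILPFeasible N T J M x
        (fun i t => if J i ≤ ∑ s ∈ Finset.Icc 1 t, x i s then (1 : ℝ) else 0) ∧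
      ILPObj N T U (fun i t => if J i ≤ ∑ s ∈ Finset.Icc 1 t, x i s then (1 : ℝ) else 0)
        = SYSObj N T J U x) ∧
    (∀ x y : ℕ → ℕ → ℝ, ILPFeasible N T J M x y →
      ILPObj N T U y ≤ SYSObj N T J U x) := by
  have hVmono : ∀ i ∈ Finset.Icc 1 N, ∀ t ∈ Finset.Icc 1 T, U i (t+1) ≤ U i t := by
    intro i hi t ht
    have ht' := Finset.mem_Icc.mp ht
    rcases Nat.lt_or_ge t T with hlt | hge
    · exact hUmono i hi t ht (t+1) (by omega) (by omega)
    · have hTt : t = T := by omega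
      rw [hTt, hU0 i hi]
      exact hUnn i hi T (Finset.mem_Icc.mpr ⟨by omega, le_refl T⟩)
  constructor
  · intro x hx
    obtain ⟨hxnn, hxcap⟩ := hx
    refine ⟨⟨hxnn, ?_, ?_, hxcap⟩, ?_⟩
    · intro i _ t _
      by_cases h : J i ≤ ∑ s ∈ Finset.Icc 1 t, x i s <;> simp [h]
    · intro i hi t _
      dsimp only
      by_cases h : J i ≤ ∑ s ∈ Finset.Icc 1 t, x i s
      · rw [if_pos h]
        exact (one_le_div (hJ i hi)).mpr h
      · rw [if_neg h]
        exact div_nonneg (Finset.sum_nonneg fun s _ => hxnn i s) (le_of_lt (hJ i hi))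
    · rw [ILPObj, SYSObj, Finset.sum_comm]
      apply Finset.sum_congr rfl
      intro i hi
      exact keyEq T (J i) (x i) (fun s => hxnn i s) (U i) (hU0 i hi)
  · intro x y hxy
    obtain ⟨hxnn, hy01, hyle, _⟩ := hxy
    rw [ILPObj, SYSObj, Finset.sum_comm]
    apply Finset.sum_le_sum
    intro i hi
    exact keyLe T (J i) (hJ i hi) (x i) (fun s => hxnn i s) (U i) (hU0 i hi)
      (hVmono i hi) (y i) (hy01 i hi) (hyle i hi)
end

section
/- Let x^R be any optimal solution of SYS-LP and define the rounding ŷ_{i,t} := 1 if Σ_{s=1}^t x^R_{i,s} ≥ J_i and ŷ_{i,t} := 0 otherwise, and set V̂ := Σ_{t=1}^T Σ_{i=1}^N u_{i,t} ŷ_{i,t}. Then (x^R, ŷ) is a feasible solution of SYS-ILP, and the chain of inequalities V^R ≥ V* ≥ V̂ holds, where V^R is the optimal value of SYS-LP and V* is the optimal value of SYS-ILP. -/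
open Finset


private lemma tele1 (f : ℕ → ℝ) (t : ℕ) :
    ∑ s ∈ Finset.Icc 1 t, (f s - f (s - 1)) = f t - f 0 := by
  induction t with
  | zero => simp
  | succ n ih =>
    rw [Finset.sum_Icc_succ_top (Nat.le_add_left 1 n), ih]
    simp only [Nat.add_sub_cancel]
    ring

private lemma tele2 (f : ℕ → ℝ) (s : ℕ) (hs1 : 1 ≤ s) : ∀ T, s ≤ T →
    ∑ t ∈ Finset.Icc s T, (f t - f (t + 1)) = f s - f (T + 1) := by
  intro T
  induction T with
  | zero => omega
  | succ n ih =>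
    intro hsT
    rcases Nat.lt_or_ge n s with h | h
    · have : s = n + 1 := by omega
      subst this
      simp
    · rw [Finset.sum_Icc_succ_top (by omega : s ≤ n + 1), ih h]
      ring

/-- Feasibility for SYS-LP: `x ≥ 0`, `Σ_{t=1}^T x_{i,t} ≤ J_i` for all `i`, and
`Σ_{i=1}^N x_{i,t} ≤ M_t` for all `t`. -/
def LPFeasible (N T : ℕ) (J M : ℕ → ℝ) (x : ℕ → ℕ → ℝ) : Prop :=
  (∀ i t, 0 ≤ x i t) ∧
  (∀ i ∈ Finset.Icc 1 N, (∑ t ∈ Finset.Icc 1 T, x i t) ≤ J i) ∧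
  (∀ t ∈ Finset.Icc 1 T, (∑ i ∈ Finset.Icc 1 N, x i t) ≤ M t)

/-- The SYS-LP objective `Σ_i Σ_t x_{i,t} F_{i,t}` with `F_{i,t} = U_{i,t}/J_i`. -/
noncomputable def LPObj (N T : ℕ) (J : ℕ → ℝ) (U : ℕ → ℕ → ℝ) (x : ℕ → ℕ → ℝ) : ℝ :=
  ∑ i ∈ Finset.Icc 1 N, ∑ t ∈ Finset.Icc 1 T, x i t * (U i t / J i)

/-- for an optimal SYS-LP solution `x^R`, the rounded pair `(x^R, ŷ)` is
feasible for SYS-ILP and `V^R ≥ V* ≥ V̂`, where `V^R = LPObj(x^R)` is the optimal value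
of SYS-LP, `V*` is the optimal value of SYS-ILP and `V̂ = ILPObj(ŷ)`. -/
theorem stmt3
    (N T : ℕ) (J M : ℕ → ℝ) (U : ℕ → ℕ → ℝ)
    (hJ : ∀ i ∈ Finset.Icc 1 N, 0 < J i)
    (hM : ∀ t ∈ Finset.Icc 1 T, 0 < M t)
    (hUnn : ∀ i ∈ Finset.Icc 1 N, ∀ t ∈ Finset.Icc 1 T, 0 ≤ U i t)
    (hUmono : ∀ i ∈ Finset.Icc 1 N, ∀ t ∈ Finset.Icc 1 T, ∀ t', t ≤ t' → t' ≤ T →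
      U i t' ≤ U i t)
    (hU0 : ∀ i ∈ Finset.Icc 1 N, U i (T + 1) = 0)
    (xR : ℕ → ℕ → ℝ)
    (hfeas : LPFeasible N T J M xR)
    (hopt : ∀ x, LPFeasible N T J M x → LPObj N T J U x ≤ LPObj N T J U xR)
    (Vstar : ℝ)
    (hVstar : IsGreatest
      {v | ∃ x y, ILPFeasible N T J M x y ∧ v = ILPObj N T U y} Vstar) :
    ILPFeasible N T J M xR
      (fun i t => if J i ≤ ∑ s ∈ Finset.Icc 1 t, xR i s then (1 : ℝ) else 0) ∧
    Vstar ≤ LPObj N T J U xR ∧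
    ILPObj N T U
      (fun i t => if J i ≤ ∑ s ∈ Finset.Icc 1 t, xR i s then (1 : ℝ) else 0)
      ≤ Vstar := by
  obtain ⟨hx0, hxJ, hxM⟩ := hfeas
  have hfeas1 : ILPFeasible N T J M xR
      (fun i t => if J i ≤ ∑ s ∈ Finset.Icc 1 t, xR i s then (1 : ℝ) else 0) := by
    refine ⟨hx0, ?_, ?_, hxM⟩
    · intro i _ t _
      by_cases h : J i ≤ ∑ s ∈ Finset.Icc 1 t, xR i s <;> simp [h]
    · intro i hi t ht
      by_cases h : J i ≤ ∑ s ∈ Finset.Icc 1 t, xR i s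
      · simp only [h, if_true]
        rw [le_div_iff₀ (hJ i hi), one_mul]
        exact h
      · simp only [h, if_false]
        exact div_nonneg (Finset.sum_nonneg fun s _ => hx0 i s) (hJ i hi).le
  refine ⟨hfeas1, ?_, hVstar.2 ⟨xR, _, hfeas1, rfl⟩⟩
  obtain ⟨⟨x, y, hfe, hv⟩, hub⟩ := hVstar
  rw [hv]
  obtain ⟨hx0', hy01, hyx, hxM'⟩ := hfe
  set S : ℕ → ℕ → ℝ := fun i t => ∑ s ∈ Finset.Icc 1 t, x i s with hS
  set c : ℕ → ℕ → ℝ := fun i t => min (S i t) (J i) with hc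
  set x' : ℕ → ℕ → ℝ := fun i t => c i t - c i (t - 1) with hx'
  have hSmono : ∀ i a b, a ≤ b → S i a ≤ S i b := fun i a b hab =>
    Finset.sum_le_sum_of_subset_of_nonneg
      (Finset.Icc_subset_Icc_right hab) (fun s _ _ => hx0' i s)
  have hcmono : ∀ i a b, a ≤ b → c i a ≤ c i b := fun i a b hab =>
    min_le_min (hSmono i a b hab) le_rfl
  have hx'0 : ∀ i t, 0 ≤ x' i t := fun i t =>
    sub_nonneg.2 (hcmono i (t - 1) t (Nat.sub_le t 1))
  have hc0 : ∀ i ∈ Finset.Icc 1 N, c i 0 = 0 := by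
    intro i hi
    have : S i 0 = 0 := by simp [hS]
    rw [hc]
    simp only [this]
    exact min_eq_left (hJ i hi).le
  have hcsum : ∀ i t, ∑ s ∈ Finset.Icc 1 t, x' i s = c i t - c i 0 :=
    fun i t => tele1 (c i) t
  have hfeasx' : LPFeasible N T J M x' := by
    refine ⟨hx'0, ?_, ?_⟩
    · intro i hi
      rw [hcsum, hc0 i hi, sub_zero]
      exact min_le_right _ _
    · intro t ht
      refine le_trans (Finset.sum_le_sum ?_) (hxM' t ht)
      intro i _
      have ht1 : 1 ≤ t := (Finset.mem_Icc.1 ht).1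
      have hSt : S i t = S i (t - 1) + x i t := by
        rw [hS]
        simp only
        rw [show t = (t - 1) + 1 by omega,
          Finset.sum_Icc_succ_top (Nat.le_add_left 1 (t - 1))]
        congr 1 <;> omega
      rw [hx']
      simp only
      rw [hc]
      simp only [hSt]
      rcases le_total (S i (t - 1)) (J i) with h | h
      · rw [min_eq_left h]
        have := min_le_left (S i (t - 1) + x i t) (J i)
        linarith
      · rw [min_eq_right h]
        have := min_le_right (S i (t - 1) + x i t) (J i)
        have := hx0' i t
        linarith
  refine le_trans ?_ (hopt x' hfeasx')
  unfold ILPObj LPObj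
  rw [Finset.sum_comm]
  refine Finset.sum_le_sum fun i hi => ?_
  have hJi := hJ i hi
  have hu : ∀ t ∈ Finset.Icc 1 T, 0 ≤ U i t - U i (t + 1) := by
    intro t ht
    obtain ⟨h1, h2⟩ := Finset.mem_Icc.1 ht
    rcases eq_or_lt_of_le h2 with rfl | h
    · rw [hU0 i hi, sub_zero]
      exact hUnn i hi t ht
    · have := hUmono i hi t ht (t + 1) (Nat.le_succ t) h
      linarith
  have hyc : ∀ t ∈ Finset.Icc 1 T, y i t ≤ c i t / J i := by
    intro t ht
    rcases hy01 i hi t ht with h0 | h1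
    · rw [h0]
      refine div_nonneg ?_ hJi.le
      have h := hcmono i 0 t (Nat.zero_le t)
      rw [hc0 i hi] at h
      exact h
    · rw [h1]
      have hyx' := hyx i hi t ht
      rw [h1, le_div_iff₀ hJi, one_mul] at hyx'
      have hcJ : c i t = J i := min_eq_right hyx'
      rw [hcJ, div_self hJi.ne']
  calc ∑ t ∈ Finset.Icc 1 T, (U i t - U i (t + 1)) * y i t
      ≤ ∑ t ∈ Finset.Icc 1 T, (U i t - U i (t + 1)) * (c i t / J i) :=
        Finset.sum_le_sum fun t ht =>
          mul_le_mul_of_nonneg_left (hyc t ht) (hu t ht)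
    _ = ∑ t ∈ Finset.Icc 1 T, x' i t * (U i t / J i) := ?_
  have key : ∀ t ∈ Finset.Icc 1 T, (U i t - U i (t + 1)) * (c i t / J i)
      = ∑ s ∈ Finset.Icc 1 T,
          (if s ≤ t then (U i t - U i (t + 1)) * (x' i s / J i) else 0) := by
    intro t ht
    have hct : c i t = ∑ s ∈ Finset.Icc 1 t, x' i s := by
      rw [hcsum, hc0 i hi, sub_zero]
    rw [hct, Finset.sum_div, Finset.mul_sum]
    rw [show Finset.Icc 1 t = (Finset.Icc 1 T).filter (· ≤ t) from ?_]
    · rw [Finset.sum_filter]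
    · obtain ⟨h1, h2⟩ := Finset.mem_Icc.1 ht
      ext s
      simp only [Finset.mem_Icc, Finset.mem_filter]
      omega
  rw [Finset.sum_congr rfl key, Finset.sum_comm]
  refine Finset.sum_congr rfl fun s hs => ?_
  obtain ⟨hs1, hs2⟩ := Finset.mem_Icc.1 hs
  have hfil : (Finset.Icc 1 T).filter (fun t => s ≤ t) = Finset.Icc s T := by
    ext t
    simp only [Finset.mem_Icc, Finset.mem_filter]
    omega
  rw [← Finset.sum_filter, hfil]
  have : ∑ t ∈ Finset.Icc s T, (U i t - U i (t + 1)) * (x' i s / J i)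
      = (∑ t ∈ Finset.Icc s T, (U i t - U i (t + 1))) * (x' i s / J i) := by
    rw [Finset.sum_mul]
  rw [this, tele2 (U i) s hs1 T hs2, hU0 i hi]
  ring
end

section
/- (Corollary of Theorem 1.) Let V^R be the optimal value of SYS-LP and V* the optimal value of SYS-ILP. Then V* ≥ (1 − T·(max_i J_i)/(min_t M_t)) · V^R; in particular, since V^R ≥ V*, the relative gap between the relaxed problem SYS-LP and the original problem SYS-ILP is at most T·(max_i J_i)/(min_t M_t). -/
open Finset

lemma sum_Icc_telescope (f : ℕ → ℝ) (b : ℕ) {a : ℕ} (h : a ≤ b + 1) :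
    ∑ t ∈ Icc a b, (f t - f (t+1)) = f a - f (b+1) := by
  induction b with
  | zero =>
    interval_cases a
    · simp
    · simp
  | succ b ih =>
    rcases Nat.lt_or_ge a (b+2) with hlt | hge
    · have ha : a ≤ b + 1 := Nat.lt_succ_iff.mp hlt
      rw [Finset.sum_Icc_succ_top ha, ih ha]; ring
    · have : Icc a (b+1) = ∅ := by
        apply Finset.Icc_eq_empty; omega
      rw [this]
      have : a = b + 2 := le_antisymm h hge
      simp [this]

lemma abel_sum (U g : ℕ → ℝ) (T : ℕ) :
    ∑ t ∈ Icc 1 T, (U t - U (t+1)) * g t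
      = (∑ t ∈ Icc 1 T, U t * (g t - g (t-1))) - U (T+1) * g T + U 1 * g 0 := by
  induction T with
  | zero => simp
  | succ T ih =>
    rw [Finset.sum_Icc_succ_top (by omega), Finset.sum_Icc_succ_top (by omega), ih]
    simp only [Nat.add_sub_cancel]
    ring

lemma sum_Icc_jump (g : ℕ → ℝ) (T : ℕ) :
    ∑ t ∈ Icc 1 T, (g t - g (t-1)) = g T - g 0 := by
  induction T with
  | zero => simp
  | succ T ih =>
    rw [Finset.sum_Icc_succ_top (by omega), ih]
    simp only [Nat.add_sub_cancel]
    ring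

lemma partA (N T : ℕ) (J M : ℕ → ℝ) (U : ℕ → ℕ → ℝ)
    (hJ : ∀ i ∈ Finset.Icc 1 N, 0 < J i)
    (hUnn : ∀ i ∈ Finset.Icc 1 N, ∀ t ∈ Finset.Icc 1 T, 0 ≤ U i t)
    (hUmono : ∀ i ∈ Finset.Icc 1 N, ∀ t ∈ Finset.Icc 1 T, ∀ t', t ≤ t' → t' ≤ T →
      U i t' ≤ U i t)
    (hU0 : ∀ i ∈ Finset.Icc 1 N, U i (T + 1) = 0)
    (x y : ℕ → ℕ → ℝ) (hf : ILPFeasible N T J M x y) :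
    ∃ x', LPFeasible N T J M x' ∧ ILPObj N T U y ≤ LPObj N T J U x' := by
  obtain ⟨hx0, hybin, hycum, hcap⟩ := hf
  set S : ℕ → ℕ → ℝ := fun i t => ∑ s ∈ Icc 1 t, x i s with hS
  set S' : ℕ → ℕ → ℝ := fun i t => min (S i t) (J i) with hS'
  refine ⟨fun i t => if i ∈ Icc 1 N ∧ t ∈ Icc 1 T then S' i t - S' i (t-1) else 0, ?_, ?_⟩
  · have hSmono : ∀ i, ∀ a b : ℕ, a ≤ b → S i a ≤ S i b := by
      intro i a b hab
      apply Finset.sum_le_sum_of_subset_of_nonneg (Finset.Icc_subset_Icc_right hab)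
      intro s _ _; exact hx0 i s
    refine ⟨?_, ?_, ?_⟩
    · intro i t
      dsimp only
      by_cases h : i ∈ Icc 1 N ∧ t ∈ Icc 1 T
      · simp only [if_pos h]
        have := hSmono i (t-1) t (Nat.sub_le t 1)
        have : S' i (t-1) ≤ S' i t := min_le_min this le_rfl
        linarith
      · rw [if_neg h]
    · intro i hi
      rw [Finset.sum_congr rfl (fun t ht => if_pos ⟨hi, ht⟩), sum_Icc_jump]
      have h0 : S' i 0 = 0 := by
        simp only [hS', hS]
        simp [le_of_lt (hJ i hi)]
      rw [h0]
      have : S' i T ≤ J i := min_le_right _ _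
      linarith
    · intro t ht
      have hle : ∀ i ∈ Icc 1 N, (if i ∈ Icc 1 N ∧ t ∈ Icc 1 T then S' i t - S' i (t-1) else 0) ≤ x i t := by
        intro i hi
        rw [if_pos ⟨hi, ht⟩]
        obtain ⟨t', rfl⟩ : ∃ t', t = t' + 1 := ⟨t - 1, by have := (mem_Icc.mp ht).1; omega⟩
        have hstep : S i (t'+1) = S i t' + x i (t'+1) := Finset.sum_Icc_succ_top (by omega) _
        simp only [Nat.add_sub_cancel, hS']
        have h1 : S i t' ≤ S i (t'+1) := by rw [hstep]; have := hx0 i (t'+1); linarith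
        rcases le_total (S i (t'+1)) (J i) with h | h
        · rw [min_eq_left h, min_eq_left (le_trans h1 h)]; linarith [hstep]
        · rw [min_eq_right h]
          rcases le_total (S i t') (J i) with h2 | h2
          · rw [min_eq_left h2]; have := hx0 i (t'+1); nlinarith [hstep]
          · rw [min_eq_right h2]; nlinarith [hstep]
      calc ∑ i ∈ Icc 1 N, _ ≤ ∑ i ∈ Icc 1 N, x i t := Finset.sum_le_sum hle
        _ ≤ M t := hcap t ht
  · rw [ILPObj, Finset.sum_comm, LPObj]
    apply Finset.sum_le_sum
    intro i hi
    have hJi := hJ i hi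
    have step1 : ∀ t ∈ Icc 1 T, (U i t - U i (t+1)) * y i t ≤ (U i t - U i (t+1)) * (S' i t / J i) := by
      intro t ht
      have hu : 0 ≤ U i t - U i (t+1) := by
        rcases eq_or_lt_of_le (mem_Icc.mp ht).2 with h | h
        · subst h; rw [hU0 i hi]; have := hUnn i hi t ht; linarith
        · have := hUmono i hi t ht (t+1) (Nat.le_succ t) (by omega); linarith
      apply mul_le_mul_of_nonneg_left _ hu
      have hS'nn : 0 ≤ S i t := Finset.sum_nonneg fun s _ => hx0 i s
      rcases hybin i hi t ht with h | h
      · rw [h]; exact div_nonneg (le_min hS'nn (le_of_lt hJi)) (le_of_lt hJi)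
      · rw [h]
        have h1 := hycum i hi t ht
        rw [h] at h1
        have h2 : J i ≤ S i t := by rwa [le_div_iff₀ hJi, one_mul] at h1
        simp only [hS', min_eq_right h2]
        rw [div_self (ne_of_gt hJi)]
    calc ∑ t ∈ Icc 1 T, (U i t - U i (t+1)) * y i t
        ≤ ∑ t ∈ Icc 1 T, (U i t - U i (t+1)) * (S' i t / J i) := Finset.sum_le_sum step1
      _ = (∑ t ∈ Icc 1 T, (U i t - U i (t+1)) * S' i t) / J i := by
          rw [Finset.sum_div]; apply Finset.sum_congr rfl; intro t _; ring
      _ = (∑ t ∈ Icc 1 T, U i t * (S' i t - S' i (t-1))) / J i := by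
          rw [abel_sum (fun t => U i t) (fun t => S' i t)]
          rw [hU0 i hi]
          have h0 : S' i 0 = 0 := by
            simp only [hS', hS]; simp [le_of_lt hJi]
          rw [h0]; ring
      _ = ∑ t ∈ Icc 1 T, (if i ∈ Icc 1 N ∧ t ∈ Icc 1 T then S' i t - S' i (t-1) else 0) * (U i t / J i) := by
          rw [Finset.sum_div]; apply Finset.sum_congr rfl; intro t ht
          rw [if_pos ⟨hi, ht⟩]; ring

noncomputable def nsq (N T : ℕ) (x : ℕ → ℕ → ℝ) : ℝ :=
  ∑ i ∈ Finset.Icc 1 N, ∑ t ∈ Finset.Icc 1 T, (x i t)^2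

noncomputable def suppF (T : ℕ) (x : ℕ → ℕ → ℝ) (i : ℕ) : Finset ℕ :=
  (Finset.Icc 1 T).filter fun t => 0 < x i t

noncomputable def probSet (N T : ℕ) (J : ℕ → ℝ) (x : ℕ → ℕ → ℝ) : Finset ℕ :=
  (Finset.Icc 1 N).filter fun i =>
    (suppF T x i).Nonempty ∧ ¬((suppF T x i).card = 1 ∧ (∑ t ∈ Finset.Icc 1 T, x i t) = J i)

lemma fewProblem (N T : ℕ) (J M' : ℕ → ℝ) (U : ℕ → ℕ → ℝ) (x : ℕ → ℕ → ℝ)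
    (hxK : LPFeasible N T J M' x)
    (hzero : ∀ i t, ¬(i ∈ Icc 1 N ∧ t ∈ Icc 1 T) → x i t = 0)
    (hvalmax : ∀ z, LPFeasible N T J M' z →
      (∀ i t, ¬(i ∈ Icc 1 N ∧ t ∈ Icc 1 T) → z i t = 0) →
      LPObj N T J U z ≤ LPObj N T J U x)
    (hnsqmax : ∀ z, LPFeasible N T J M' z →
      (∀ i t, ¬(i ∈ Icc 1 N ∧ t ∈ Icc 1 T) → z i t = 0) →
      LPObj N T J U z = LPObj N T J U x → nsq N T z ≤ nsq N T x) :
    (probSet N T J x).card ≤ T := by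
  classical
  by_contra hcon
  push_neg at hcon
  obtain ⟨hx0, hrow, hcap⟩ := hxK
  set Pb := probSet N T J x with hPb
  -- basic facts about Pb members
  have hPbIcc : Pb ⊆ Icc 1 N := Finset.filter_subset _ _
  have hmem : ∀ i ∈ Pb, (suppF T x i).Nonempty ∧
      ¬((suppF T x i).card = 1 ∧ (∑ t ∈ Icc 1 T, x i t) = J i) := by
    intro i hi; exact (Finset.mem_filter.mp hi).2
  -- choices
  set t1 : ℕ → ℕ := fun i => if h : (suppF T x i).Nonempty then (suppF T x i).min' h else 0 with ht1
  set t2 : ℕ → ℕ := fun i => if h : ((suppF T x i).erase (t1 i)).Nonempty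
      then ((suppF T x i).erase (t1 i)).min' h else 0 with ht2
  have ht1mem : ∀ i ∈ Pb, t1 i ∈ suppF T x i := by
    intro i hi
    rw [ht1]; dsimp only; rw [dif_pos (hmem i hi).1]; exact Finset.min'_mem _ _
  have ht2mem : ∀ i ∈ Pb, 2 ≤ (suppF T x i).card →
      t2 i ∈ suppF T x i ∧ t2 i ≠ t1 i := by
    intro i hi h2
    have hne : ((suppF T x i).erase (t1 i)).Nonempty := by
      rw [← Finset.card_pos, Finset.card_erase_of_mem (ht1mem i hi)]; omega
    have : t2 i ∈ (suppF T x i).erase (t1 i) := by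
      rw [ht2]; dsimp only; rw [dif_pos hne]; exact Finset.min'_mem _ _
    exact ⟨Finset.mem_of_mem_erase this, Finset.ne_of_mem_erase this⟩
  have hsupp_sub : ∀ i, suppF T x i ⊆ Icc 1 T := fun i => Finset.filter_subset _ _
  have hsupp_pos : ∀ i, ∀ t ∈ suppF T x i, 0 < x i t := by
    intro i t ht; exact (Finset.mem_filter.mp ht).2
  -- the direction family
  set imp : ℕ → ℕ → ℝ := fun i t =>
    (if t = t1 i then (1:ℝ) else 0) - (if 2 ≤ (suppF T x i).card ∧ t = t2 i then (1:ℝ) else 0)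
    with himp
  have himp_abs : ∀ i t, |imp i t| ≤ 1 := by
    intro i t; rw [himp]; dsimp only; split_ifs <;> norm_num
  have himp_ne : ∀ i t, imp i t ≠ 0 → t = t1 i ∨ (2 ≤ (suppF T x i).card ∧ t = t2 i) := by
    intro i t h
    by_contra hc
    push_neg at hc
    apply h
    rw [himp]; dsimp only
    rw [if_neg hc.1, if_neg (by intro hh; exact hc.2 hh.1 hh.2)]
    ring
  -- linear dependence
  have hcardT : Fintype.card ↥(Icc 1 T) = T := by rw [Fintype.card_coe, Nat.card_Icc]; omega
  have hnotli : ¬ LinearIndependent ℝ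
      (fun i : ↥Pb => (fun t : ↥(Icc 1 T) => imp i.1 t.1)) := by
    intro hli
    have := hli.fintype_card_le_finrank
    rw [Module.finrank_fintype_fun_eq_card, Fintype.card_coe, hcardT] at this
    omega
  obtain ⟨g, hgsum, i0, hgi0⟩ := Fintype.not_linearIndependent_iff.mp hnotli
  set αe : ℕ → ℝ := fun i => if h : i ∈ Pb then g ⟨i, h⟩ else 0 with hαe
  set d : ℕ → ℕ → ℝ := fun i t => αe i * imp i t with hd
  have hαe_out : ∀ i, i ∉ Pb → αe i = 0 := by intro i h; rw [hαe]; exact dif_neg h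
  have hαe_in : ∀ (i : ↥Pb), αe i.1 = g i := by
    intro i; rw [hαe]; exact dif_pos i.2
  -- tier conservation
  have htier : ∀ t ∈ Icc 1 T, ∑ i ∈ Icc 1 N, d i t = 0 := by
    intro t ht
    have h1 : ∑ i ∈ Icc 1 N, d i t = ∑ i ∈ Pb, d i t := by
      symm
      apply Finset.sum_subset hPbIcc
      intro i _ hni
      rw [hd]; dsimp only; rw [hαe_out i hni]; ring
    rw [h1, ← Finset.sum_coe_sort Pb (fun i => d i t)]
    have h2 : ∀ (i : ↥Pb), d i.1 t = g i * imp i.1 t := by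
      intro i; rw [hd]; dsimp only; rw [hαe_in]
    rw [Finset.sum_congr rfl (fun i _ => h2 i)]
    have := congrFun hgsum ⟨t, ht⟩
    simpa using this
  -- row sums of imp
  have hrowimp : ∀ i ∈ Pb, ∑ t ∈ Icc 1 T, imp i t
      = 1 - (if 2 ≤ (suppF T x i).card then (1:ℝ) else 0) := by
    intro i hi
    rw [himp]; dsimp only
    rw [Finset.sum_sub_distrib]
    congr 1
    · rw [Finset.sum_ite_eq' (Icc 1 T) (t1 i) (fun _ => (1:ℝ)),
        if_pos (hsupp_sub i (ht1mem i hi))]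
    · by_cases h2 : 2 ≤ (suppF T x i).card
      · have hsimp : ∀ t, (if 2 ≤ (suppF T x i).card ∧ t = t2 i then (1:ℝ) else 0)
            = (if t = t2 i then (1:ℝ) else 0) := by intro t; simp [h2]
        rw [Finset.sum_congr rfl (fun t _ => hsimp t),
          Finset.sum_ite_eq' (Icc 1 T) (t2 i) (fun _ => (1:ℝ)),
          if_pos (hsupp_sub i (ht2mem i hi h2).1), if_pos h2]
      · simp [h2]
  -- epsilon
  set A : ℝ := 1 + ∑ i ∈ Pb, |αe i| with hA
  have hApos : 0 < A := by
    rw [hA]; have : 0 ≤ ∑ i ∈ Pb, |αe i| := Finset.sum_nonneg fun _ _ => abs_nonneg _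
    linarith
  have habs : ∀ i ∈ Pb, |αe i| < A := by
    intro i hi
    have := Finset.single_le_sum (f := fun i => |αe i|) (fun j _ => abs_nonneg _) hi
    rw [hA]; linarith
  have hPbne : Pb.Nonempty := Finset.card_pos.mp (by omega)
  set β : ℝ := Pb.inf' hPbne (fun i => if 2 ≤ (suppF T x i).card
      then min (x i (t1 i)) (x i (t2 i))
      else min (x i (t1 i)) (J i - ∑ t ∈ Icc 1 T, x i t)) with hβ
  have hβpos : 0 < β := by
    rw [hβ, Finset.lt_inf'_iff]
    intro i hi
    have h1 : 0 < x i (t1 i) := hsupp_pos i _ (ht1mem i hi)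
    by_cases h2 : 2 ≤ (suppF T x i).card
    · rw [if_pos h2]
      exact lt_min h1 (hsupp_pos i _ (ht2mem i hi h2).1)
    · rw [if_neg h2]
      refine lt_min h1 ?_
      have hc1 : (suppF T x i).card = 1 := by
        have := Finset.card_pos.mpr (hmem i hi).1; omega
      have hne : (∑ t ∈ Icc 1 T, x i t) ≠ J i := by
        intro h; exact (hmem i hi).2 ⟨hc1, h⟩
      have hle := hrow i (hPbIcc hi)
      cases lt_or_eq_of_le hle with
      | inl h => linarith
      | inr h => exact absurd h hne
  have hβle1 : ∀ i ∈ Pb, β ≤ x i (t1 i) := by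
    intro i hi
    refine le_trans (Finset.inf'_le _ hi) ?_
    by_cases h2 : 2 ≤ (suppF T x i).card
    · rw [if_pos h2]; exact min_le_left _ _
    · rw [if_neg h2]; exact min_le_left _ _
  have hβle2 : ∀ i ∈ Pb, 2 ≤ (suppF T x i).card → β ≤ x i (t2 i) := by
    intro i hi h2
    refine le_trans (Finset.inf'_le _ hi) ?_
    rw [if_pos h2]; exact min_le_right _ _
  have hβslack : ∀ i ∈ Pb, ¬(2 ≤ (suppF T x i).card) →
      β ≤ J i - ∑ t ∈ Icc 1 T, x i t := by
    intro i hi h2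
    refine le_trans (Finset.inf'_le _ hi) ?_
    rw [if_neg h2]; exact min_le_right _ _
  set ε : ℝ := β / A with hε
  have hεpos : 0 < ε := div_pos hβpos hApos
  -- bound on perturbation size
  have hsmall : ∀ i ∈ Pb, ∀ (e : ℝ), |e| ≤ ε → |e * αe i| < β := by
    intro i hi e he
    have h1 : |e * αe i| = |e| * |αe i| := abs_mul _ _
    have h2 : |e| * |αe i| ≤ ε * |αe i| := by
      apply mul_le_mul_of_nonneg_right he (abs_nonneg _)
    have h3 : ε * |αe i| < ε * A := by
      rcases eq_or_lt_of_le (abs_nonneg (αe i)) with h0 | h0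
      · rw [← h0]; simpa using mul_pos hεpos hApos
      · exact (mul_lt_mul_iff_right₀ hεpos).mpr (habs i hi)
    have h4 : ε * A = β := by rw [hε]; field_simp
    linarith
  have hd_abs : ∀ i t, |d i t| ≤ |αe i| := by
    intro i t
    rw [hd]; dsimp only; rw [abs_mul]
    calc |αe i| * |imp i t| ≤ |αe i| * 1 :=
          mul_le_mul_of_nonneg_left (himp_abs i t) (abs_nonneg _)
      _ = |αe i| := mul_one _
  have hd_ne : ∀ i t, d i t ≠ 0 → i ∈ Pb ∧ t ∈ suppF T x i := by
    intro i t h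
    rw [hd] at h; dsimp only at h
    have hα : αe i ≠ 0 := fun hh => h (by rw [hh]; ring)
    have hiP : i ∈ Pb := by by_contra hc; exact hα (hαe_out i hc)
    refine ⟨hiP, ?_⟩
    have himpne : imp i t ≠ 0 := fun hh => h (by rw [hh]; ring)
    rcases himp_ne i t himpne with h1 | h1
    · rw [h1]; exact ht1mem i hiP
    · rw [h1.2]; exact (ht2mem i hiP h1.1).1
  -- feasibility of perturbed points
  have hfeas : ∀ (e : ℝ), |e| ≤ ε →
      LPFeasible N T J M' (fun i t => x i t + e * d i t) ∧
      (∀ i t, ¬(i ∈ Icc 1 N ∧ t ∈ Icc 1 T) → x i t + e * d i t = 0) := by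
    intro e he
    constructor
    · refine ⟨?_, ?_, ?_⟩
      · intro i t
        dsimp only
        by_cases hdt : d i t = 0
        · rw [hdt]; simpa using hx0 i t
        · obtain ⟨hiP, htS⟩ := hd_ne i t hdt
          have hxβ : β ≤ x i t := by
            have himpne : imp i t ≠ 0 := by
              intro hh; apply hdt; rw [hd]; dsimp only; rw [hh]; ring
            rcases himp_ne i t himpne with h1 | h1
            · rw [h1]; exact hβle1 i hiP
            · rw [h1.2]; exact hβle2 i hiP h1.1
          have h1 : |e * d i t| < β := by
            have := hd_abs i t
            calc |e * d i t| = |e| * |d i t| := abs_mul _ _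
              _ ≤ |e| * |αe i| := mul_le_mul_of_nonneg_left this (abs_nonneg _)
              _ = |e * αe i| := (abs_mul _ _).symm
              _ < β := hsmall i hiP e he
          have := abs_lt.mp h1
          linarith
      · intro i hi
        dsimp only
        have hsplit : ∑ t ∈ Icc 1 T, (x i t + e * d i t)
            = (∑ t ∈ Icc 1 T, x i t) + (e * αe i) * ∑ t ∈ Icc 1 T, imp i t := by
          rw [Finset.sum_add_distrib, Finset.mul_sum]
          congr 1
          apply Finset.sum_congr rfl
          intro t _
          simp only [hd]
          ring
        rw [hsplit]
        by_cases hiP : i ∈ Pb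
        · rw [hrowimp i hiP]
          by_cases h2 : 2 ≤ (suppF T x i).card
          · rw [if_pos h2]
            have h5 : (1:ℝ) - 1 = 0 := by ring
            rw [h5, mul_zero, add_zero]
            exact hrow i hi
          · rw [if_neg h2]
            have h3 : |e * αe i| < β := hsmall i hiP e he
            have h4 := hβslack i hiP h2
            have h6 := abs_lt.mp h3
            have h7 : (1:ℝ) - 0 = 1 := by ring
            rw [h7, mul_one]
            linarith
        · rw [hαe_out i hiP]
          simpa using hrow i hi
      · intro t ht
        dsimp only
        have hsplit : ∑ i ∈ Icc 1 N, (x i t + e * d i t)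
            = (∑ i ∈ Icc 1 N, x i t) + e * ∑ i ∈ Icc 1 N, d i t := by
          rw [Finset.sum_add_distrib, Finset.mul_sum]
        rw [hsplit, htier t ht]
        simpa using hcap t ht
    · intro i t hni
      have hd0 : d i t = 0 := by
        by_contra hc
        obtain ⟨hiP, htS⟩ := hd_ne i t hc
        exact hni ⟨hPbIcc hiP, hsupp_sub i htS⟩
      rw [hd0, hzero i t hni]; ring
  -- value linearity
  set Sd : ℝ := ∑ i ∈ Icc 1 N, ∑ t ∈ Icc 1 T, d i t * (U i t / J i) with hSd
  have hlin : ∀ (e : ℝ), LPObj N T J U (fun i t => x i t + e * d i t)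
      = LPObj N T J U x + e * Sd := by
    intro e
    rw [LPObj, LPObj, hSd]
    simp only [Finset.mul_sum, ← Finset.sum_add_distrib]
    apply Finset.sum_congr rfl; intro i _
    apply Finset.sum_congr rfl; intro t _
    ring
  -- nsq computations
  have hnsq_id : ∀ (e : ℝ), nsq N T (fun i t => x i t + e * d i t)
      + nsq N T (fun i t => x i t + (-e) * d i t)
      = 2 * nsq N T x + 2 * e^2 * nsq N T d := by
    intro e
    rw [nsq, nsq, nsq, nsq]
    simp only [Finset.mul_sum, ← Finset.sum_add_distrib]
    apply Finset.sum_congr rfl; intro i _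
    apply Finset.sum_congr rfl; intro t _
    ring
  have hnsqd : 0 < nsq N T d := by
    have hi0P : (i0 : ℕ) ∈ Pb := i0.2
    have hdval : d i0.1 (t1 i0.1) = g i0 := by
      rw [hd]; dsimp only
      rw [hαe_in i0, himp]; dsimp only
      rw [if_pos rfl, if_neg]
      · ring
      · intro hh
        exact (ht2mem i0.1 hi0P hh.1).2 hh.2.symm
    have h1 : (g i0)^2 ≤ ∑ t ∈ Icc 1 T, (d i0.1 t)^2 := by
      rw [← hdval]
      exact Finset.single_le_sum (f := fun t => (d i0.1 t)^2) (fun t _ => sq_nonneg _)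
        (hsupp_sub i0.1 (ht1mem i0.1 hi0P))
    have h2 : ∑ t ∈ Icc 1 T, (d i0.1 t)^2 ≤ nsq N T d := by
      rw [nsq]
      exact Finset.single_le_sum (f := fun i => ∑ t ∈ Icc 1 T, (d i t)^2)
        (fun i _ => Finset.sum_nonneg fun t _ => sq_nonneg _) (hPbIcc hi0P)
    have h3 : 0 < (g i0)^2 := by positivity
    linarith
  -- final contradiction
  rcases lt_trichotomy Sd 0 with hS | hS | hS
  · have h1 := hfeas (-ε) (by rw [abs_neg, abs_of_pos hεpos])
    have h2 := hvalmax _ h1.1 h1.2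
    rw [hlin (-ε)] at h2
    have hpos : 0 < ε * (-Sd) := mul_pos hεpos (by linarith)
    nlinarith
  · have hp := hfeas ε (by rw [abs_of_pos hεpos])
    have hm := hfeas (-ε) (by rw [abs_neg, abs_of_pos hεpos])
    have h2 := hnsqmax _ hp.1 hp.2 (by rw [hlin ε, hS]; ring)
    have h3 := hnsqmax _ hm.1 hm.2 (by rw [hlin (-ε), hS]; ring)
    have h4 := hnsq_id ε
    have h5 : 0 < ε^2 * nsq N T d := mul_pos (pow_pos hεpos 2) hnsqd
    linarith
  · have h1 := hfeas ε (by rw [abs_of_pos hεpos])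
    have h2 := hvalmax _ h1.1 h1.2
    rw [hlin ε] at h2
    have hpos : 0 < ε * Sd := mul_pos hεpos hS
    nlinarith

lemma exists_opt (N T : ℕ) (hT : 1 ≤ T) (J M' : ℕ → ℝ) (U : ℕ → ℕ → ℝ)
    (hJnn : ∀ i ∈ Icc 1 N, 0 ≤ J i) (hM'nn : ∀ t ∈ Icc 1 T, 0 ≤ M' t) :
    ∃ x : ℕ → ℕ → ℝ,
      (LPFeasible N T J M' x ∧ ∀ i t, ¬(i ∈ Icc 1 N ∧ t ∈ Icc 1 T) → x i t = 0) ∧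
      (∀ z, LPFeasible N T J M' z → (∀ i t, ¬(i ∈ Icc 1 N ∧ t ∈ Icc 1 T) → z i t = 0) →
        LPObj N T J U z ≤ LPObj N T J U x) ∧
      (∀ z, LPFeasible N T J M' z → (∀ i t, ¬(i ∈ Icc 1 N ∧ t ∈ Icc 1 T) → z i t = 0) →
        LPObj N T J U z = LPObj N T J U x → nsq N T z ≤ nsq N T x) := by
  classical
  set K : Set (ℕ → ℕ → ℝ) := {x | LPFeasible N T J M' x ∧
      ∀ i t, ¬(i ∈ Icc 1 N ∧ t ∈ Icc 1 T) → x i t = 0} with hK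
  have hcoord : ∀ i t, Continuous fun x : ℕ → ℕ → ℝ => x i t := by
    intro i t
    exact (continuous_apply t).comp (continuous_apply i)
  have hcont : Continuous (LPObj N T J U) := by
    unfold LPObj
    exact continuous_finset_sum _ fun i _ => continuous_finset_sum _ fun t _ =>
      (hcoord i t).mul continuous_const
  have hcontn : Continuous (nsq N T) := by
    unfold nsq
    exact continuous_finset_sum _ fun i _ => continuous_finset_sum _ fun t _ =>
      (hcoord i t).pow 2
  have hKclosed : IsClosed K := by
    have h1 : IsClosed {x : ℕ → ℕ → ℝ | ∀ i t, 0 ≤ x i t} := by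
      simp only [Set.setOf_forall]
      exact isClosed_iInter fun i => isClosed_iInter fun t =>
        isClosed_le continuous_const (hcoord i t)
    have h2 : IsClosed {x : ℕ → ℕ → ℝ | ∀ i ∈ Icc 1 N,
        (∑ t ∈ Icc 1 T, x i t) ≤ J i} := by
      simp only [Set.setOf_forall]
      refine isClosed_iInter fun i => isClosed_iInter fun hi => ?_
      exact isClosed_le (continuous_finset_sum _ fun t _ => hcoord i t) continuous_const
    have h3 : IsClosed {x : ℕ → ℕ → ℝ | ∀ t ∈ Icc 1 T,
        (∑ i ∈ Icc 1 N, x i t) ≤ M' t} := by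
      simp only [Set.setOf_forall]
      refine isClosed_iInter fun t => isClosed_iInter fun ht => ?_
      exact isClosed_le (continuous_finset_sum _ fun i _ => hcoord i t) continuous_const
    have h4 : IsClosed {x : ℕ → ℕ → ℝ | ∀ i t,
        ¬(i ∈ Icc 1 N ∧ t ∈ Icc 1 T) → x i t = 0} := by
      simp only [Set.setOf_forall]
      refine isClosed_iInter fun i => isClosed_iInter fun t => isClosed_iInter fun h => ?_
      exact isClosed_eq (hcoord i t) continuous_const
    have : K = {x : ℕ → ℕ → ℝ | ∀ i t, 0 ≤ x i t} ∩
        ({x | ∀ i ∈ Icc 1 N, (∑ t ∈ Icc 1 T, x i t) ≤ J i} ∩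
        ({x | ∀ t ∈ Icc 1 T, (∑ i ∈ Icc 1 N, x i t) ≤ M' t} ∩
        {x | ∀ i t, ¬(i ∈ Icc 1 N ∧ t ∈ Icc 1 T) → x i t = 0})) := by
      ext x
      simp only [hK, Set.mem_setOf_eq, Set.mem_inter_iff, LPFeasible]
      tauto
    rw [this]
    exact h1.inter (h2.inter (h3.inter h4))
  set Msup : ℝ := (Icc 1 T).sup' (Finset.nonempty_Icc.mpr hT) M' with hMsup
  have hKcomp : IsCompact K := by
    have hbox : IsCompact (Set.pi Set.univ fun i : ℕ => Set.pi Set.univ fun t : ℕ =>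
        if i ∈ Icc 1 N ∧ t ∈ Icc 1 T then Set.Icc (0:ℝ) Msup else {0}) := by
      refine isCompact_univ_pi fun i => isCompact_univ_pi fun t => ?_
      by_cases h : i ∈ Icc 1 N ∧ t ∈ Icc 1 T
      · rw [if_pos h]; exact isCompact_Icc
      · rw [if_neg h]; exact isCompact_singleton
    refine IsCompact.of_isClosed_subset hbox hKclosed ?_
    intro x hx
    obtain ⟨⟨hx0, hrow, hcap⟩, hz⟩ := hx
    rw [Set.mem_univ_pi]
    intro i
    rw [Set.mem_univ_pi]
    intro t
    by_cases h : i ∈ Icc 1 N ∧ t ∈ Icc 1 T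
    · rw [if_pos h]
      refine ⟨hx0 i t, ?_⟩
      calc x i t ≤ ∑ i' ∈ Icc 1 N, x i' t :=
            Finset.single_le_sum (fun i' _ => hx0 i' t) h.1
        _ ≤ M' t := hcap t h.2
        _ ≤ Msup := Finset.le_sup' M' h.2
    · rw [if_neg h]
      exact hz i t h
  have hKne : K.Nonempty := by
    refine ⟨fun _ _ => 0, ⟨⟨fun _ _ => le_refl 0, ?_, ?_⟩, fun _ _ _ => rfl⟩⟩
    · intro i hi; rw [Finset.sum_const_zero]; exact hJnn i hi
    · intro t ht; rw [Finset.sum_const_zero]; exact hM'nn t ht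
  obtain ⟨xm, hxmK, hxmmax⟩ := hKcomp.exists_isMaxOn hKne hcont.continuousOn
  have hKmaxcomp : IsCompact (K ∩ {z | LPObj N T J U z = LPObj N T J U xm}) :=
    hKcomp.inter_right (isClosed_eq hcont continuous_const)
  have hKmaxne : (K ∩ {z | LPObj N T J U z = LPObj N T J U xm}).Nonempty :=
    ⟨xm, hxmK, rfl⟩
  obtain ⟨xs, hxsK, hxsmax⟩ := hKmaxcomp.exists_isMaxOn hKmaxne hcontn.continuousOn
  refine ⟨xs, hxsK.1, ?_, ?_⟩
  · intro z hz1 hz2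
    have h1 : LPObj N T J U z ≤ LPObj N T J U xm := hxmmax ⟨hz1, hz2⟩
    rw [← hxsK.2] at h1
    exact h1
  · intro z hz1 hz2 hz3
    exact hxsmax ⟨⟨hz1, hz2⟩, by show LPObj N T J U z = _; rw [hz3]; exact hxsK.2⟩

lemma rounding (N T : ℕ) (J M : ℕ → ℝ) (U : ℕ → ℕ → ℝ) (Jmx : ℝ)
    (hJ : ∀ i ∈ Icc 1 N, 0 < J i)
    (hJmx : ∀ i ∈ Icc 1 N, J i ≤ Jmx) (hJmx0 : 0 ≤ Jmx)
    (hUnn : ∀ i ∈ Finset.Icc 1 N, ∀ t ∈ Finset.Icc 1 T, 0 ≤ U i t)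
    (hUmono : ∀ i ∈ Finset.Icc 1 N, ∀ t ∈ Finset.Icc 1 T, ∀ t', t ≤ t' → t' ≤ T →
      U i t' ≤ U i t)
    (hU0 : ∀ i ∈ Finset.Icc 1 N, U i (T + 1) = 0)
    (x : ℕ → ℕ → ℝ)
    (hfeas : LPFeasible N T J (fun t => M t - T * Jmx) x)
    (hcard : (probSet N T J x).card ≤ T) :
    ∃ xI yI, ILPFeasible N T J M xI yI ∧ LPObj N T J U x ≤ ILPObj N T U yI := by
  classical
  obtain ⟨hx0, hrow, hcap⟩ := hfeas
  set σ : ℕ → ℕ := fun i => if h : (suppF T x i).Nonempty then (suppF T x i).min' h else T+1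
    with hσ
  have hσmem : ∀ i, (suppF T x i).Nonempty → σ i ∈ suppF T x i := by
    intro i h
    rw [hσ]; dsimp only; rw [dif_pos h]; exact Finset.min'_mem _ _
  have hσempty : ∀ i, ¬(suppF T x i).Nonempty → σ i = T + 1 := by
    intro i h
    rw [hσ]; dsimp only; rw [dif_neg h]
  have hsupp_sub : ∀ i, suppF T x i ⊆ Icc 1 T := fun i => Finset.filter_subset _ _
  have hσ1 : ∀ i, 1 ≤ σ i := by
    intro i
    by_cases h : (suppF T x i).Nonempty
    · exact (mem_Icc.mp (hsupp_sub i (hσmem i h))).1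
    · rw [hσempty i h]; omega
  have hσle : ∀ i, σ i ≤ T + 1 := by
    intro i
    by_cases h : (suppF T x i).Nonempty
    · have := (mem_Icc.mp (hsupp_sub i (hσmem i h))).2; omega
    · rw [hσempty i h]
  have hσle' : ∀ i, ∀ t ∈ suppF T x i, σ i ≤ t := by
    intro i t ht
    have hne : (suppF T x i).Nonempty := ⟨t, ht⟩
    rw [hσ]; dsimp only; rw [dif_pos hne]; exact Finset.min'_le _ _ ht
  have hxzero : ∀ i, ∀ t ∈ Icc 1 T, t ∉ suppF T x i → x i t = 0 := by
    intro i t ht hns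
    by_contra hc
    exact hns (Finset.mem_filter.mpr ⟨ht, lt_of_le_of_ne (hx0 i t) (Ne.symm hc)⟩)
  set xI : ℕ → ℕ → ℝ := fun i t => if i ∈ Icc 1 N ∧ σ i = t then J i else 0 with hxI
  set yI : ℕ → ℕ → ℝ := fun i t => if i ∈ Icc 1 N ∧ σ i ≤ t then 1 else 0 with hyI
  have hxInn : ∀ i t, 0 ≤ xI i t := by
    intro i t
    rw [hxI]; dsimp only
    split_ifs with h
    · exact le_of_lt (hJ i h.1)
    · exact le_refl 0
  refine ⟨xI, yI, ⟨hxInn, ?_, ?_, ?_⟩, ?_⟩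
  · intro i _ t _
    rw [hyI]; dsimp only
    split_ifs
    · right; rfl
    · left; rfl
  · intro i hi t ht
    rw [hyI]; dsimp only
    by_cases h : σ i ≤ t
    · rw [if_pos ⟨hi, h⟩]
      have hσIcc : σ i ∈ Icc 1 t := mem_Icc.mpr ⟨hσ1 i, h⟩
      have hcum : ∑ s ∈ Icc 1 t, xI i s = J i := by
        rw [hxI]; dsimp only
        have : ∀ s, (if i ∈ Icc 1 N ∧ σ i = s then J i else 0)
            = (if σ i = s then J i else 0) := by
          intro s
          by_cases hs : σ i = s
          · rw [if_pos ⟨hi, hs⟩, if_pos hs]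
          · rw [if_neg (fun hh => hs hh.2), if_neg hs]
        rw [Finset.sum_congr rfl fun s _ => this s, Finset.sum_ite_eq, if_pos hσIcc]
      rw [hcum, div_self (ne_of_gt (hJ i hi))]
    · rw [if_neg (fun hh => h hh.2)]
      exact div_nonneg (Finset.sum_nonneg fun s _ => hxInn i s) (le_of_lt (hJ i hi))
  · intro t ht
    have hsum : ∑ i ∈ Icc 1 N, xI i t
        = ∑ i ∈ (Icc 1 N).filter (fun i => σ i = t), J i := by
      rw [Finset.sum_filter]
      apply Finset.sum_congr rfl
      intro i hi
      rw [hxI]; dsimp only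
      by_cases hs : σ i = t
      · rw [if_pos ⟨hi, hs⟩, if_pos hs]
      · rw [if_neg (fun hh => hs hh.2), if_neg hs]
    rw [hsum]
    set Fl := (Icc 1 N).filter (fun i => σ i = t) with hFl
    rw [← Finset.sum_filter_add_sum_filter_not Fl (fun i => i ∈ probSet N T J x) J]
    have hgood : ∑ i ∈ Fl.filter (fun i => ¬(i ∈ probSet N T J x)), J i
        ≤ M t - T * Jmx := by
      have heq : ∀ i ∈ Fl.filter (fun i => ¬(i ∈ probSet N T J x)), J i = x i t := by
        intro i hi
        obtain ⟨hiF, hiP⟩ := Finset.mem_filter.mp hi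
        obtain ⟨hiN, hit⟩ := Finset.mem_filter.mp hiF
        have hne : (suppF T x i).Nonempty := by
          by_contra hc
          have := hσempty i hc
          rw [this] at hit
          have := (mem_Icc.mp ht).2
          omega
        have hnp : ¬((suppF T x i).Nonempty ∧
            ¬((suppF T x i).card = 1 ∧ (∑ s ∈ Icc 1 T, x i s) = J i)) := by
          intro hc
          exact hiP (Finset.mem_filter.mpr ⟨hiN, hc⟩)
        push_neg at hnp
        obtain ⟨hc1, hc2⟩ := hnp hne
        obtain ⟨a, ha⟩ := Finset.card_eq_one.mp hc1
        have hσa : σ i = a := by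
          have := hσmem i hne
          rw [ha, Finset.mem_singleton] at this
          exact this
        have hsuppeq : suppF T x i = {t} := by rw [ha, ← hσa, hit]
        have : ∑ s ∈ Icc 1 T, x i s = x i t := by
          rw [← Finset.sum_subset (hsupp_sub i)]
          · rw [hsuppeq, Finset.sum_singleton]
          · intro s hs hns
            exact hxzero i s hs hns
        rw [← hc2, this]
      rw [Finset.sum_congr rfl heq]
      calc ∑ i ∈ Fl.filter (fun i => ¬(i ∈ probSet N T J x)), x i t
          ≤ ∑ i ∈ Icc 1 N, x i t := by
            apply Finset.sum_le_sum_of_subset_of_nonneg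
            · exact subset_trans (Finset.filter_subset _ _) (Finset.filter_subset _ _)
            · intro i _ _; exact hx0 i t
        _ ≤ M t - T * Jmx := hcap t ht
    have hbad : ∑ i ∈ Fl.filter (fun i => i ∈ probSet N T J x), J i ≤ T * Jmx := by
      have hsub : Fl.filter (fun i => i ∈ probSet N T J x) ⊆ probSet N T J x := by
        intro i hi
        exact (Finset.mem_filter.mp hi).2
      have h1 : ∑ i ∈ Fl.filter (fun i => i ∈ probSet N T J x), J i
          ≤ (Fl.filter (fun i => i ∈ probSet N T J x)).card * Jmx := by
        have := Finset.sum_le_card_nsmul (Fl.filter (fun i => i ∈ probSet N T J x)) J Jmx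
          (fun i hi => hJmx i (subset_trans (Finset.filter_subset _ _) (Finset.filter_subset _ _) hi))
        simpa [nsmul_eq_mul] using this
      have h2 : ((Fl.filter (fun i => i ∈ probSet N T J x)).card : ℝ) ≤ (T : ℝ) := by
        have := Finset.card_le_card hsub
        have := le_trans this hcard
        exact_mod_cast this
      calc ∑ i ∈ Fl.filter (fun i => i ∈ probSet N T J x), J i
          ≤ (Fl.filter (fun i => i ∈ probSet N T J x)).card * Jmx := h1
        _ ≤ T * Jmx := mul_le_mul_of_nonneg_right h2 hJmx0
    linarith
  · -- objective comparison
    rw [ILPObj, Finset.sum_comm, LPObj]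
    apply Finset.sum_le_sum
    intro i hi
    have hrowle : ∑ t ∈ Icc 1 T, x i t * (U i t / J i) ≤ U i (σ i) := by
      by_cases hne : (suppF T x i).Nonempty
      · have hσIcc : σ i ∈ Icc 1 T := hsupp_sub i (hσmem i hne)
        have hterm : ∀ t ∈ Icc 1 T, x i t * (U i t / J i) ≤ x i t * (U i (σ i) / J i) := by
          intro t ht
          rcases eq_or_lt_of_le (hx0 i t) with h0 | h0
          · rw [← h0]; simp
          · have htS : t ∈ suppF T x i := Finset.mem_filter.mpr ⟨ht, h0⟩
            have hU : U i t ≤ U i (σ i) :=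
              hUmono i hi (σ i) hσIcc t (hσle' i t htS) (mem_Icc.mp ht).2
            apply mul_le_mul_of_nonneg_left _ (le_of_lt h0)
            have hJi := hJ i hi
            gcongr
        calc ∑ t ∈ Icc 1 T, x i t * (U i t / J i)
            ≤ ∑ t ∈ Icc 1 T, x i t * (U i (σ i) / J i) := Finset.sum_le_sum hterm
          _ = (∑ t ∈ Icc 1 T, x i t) * (U i (σ i) / J i) := by rw [← Finset.sum_mul]
          _ ≤ J i * (U i (σ i) / J i) := by
              apply mul_le_mul_of_nonneg_right (hrow i hi)
              exact div_nonneg (hUnn i hi _ hσIcc) (le_of_lt (hJ i hi))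
          _ = U i (σ i) := mul_div_cancel₀ _ (ne_of_gt (hJ i hi))
      · have hz : ∀ t ∈ Icc 1 T, x i t * (U i t / J i) = 0 := by
          intro t ht
          rw [hxzero i t ht (by
            rw [Finset.not_nonempty_iff_eq_empty.mp hne]; exact Finset.notMem_empty t)]
          ring
        rw [Finset.sum_congr rfl hz, Finset.sum_const_zero, hσempty i hne, hU0 i hi]
    have hRHS : ∑ t ∈ Icc 1 T, (U i t - U i (t+1)) * yI i t = U i (σ i) := by
      have hy : ∀ t ∈ Icc 1 T, (U i t - U i (t+1)) * yI i t
          = (if σ i ≤ t then (U i t - U i (t+1)) else 0) := by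
        intro t _
        rw [hyI]; dsimp only
        by_cases h : σ i ≤ t
        · rw [if_pos ⟨hi, h⟩, if_pos h, mul_one]
        · rw [if_neg (fun hh => h hh.2), if_neg h, mul_zero]
      rw [Finset.sum_congr rfl hy, ← Finset.sum_filter]
      have hfil : (Icc 1 T).filter (fun t => σ i ≤ t) = Icc (σ i) T := by
        ext s
        simp only [Finset.mem_filter, mem_Icc]
        have := hσ1 i
        omega
      rw [hfil, sum_Icc_telescope (fun t => U i t) T (hσle i), hU0 i hi, sub_zero]
    rw [hRHS]
    exact hrowle

/-- Corollary of Theorem 1: the optimal values satisfy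
`V* ≥ (1 − T·(max_i J_i)/(min_t M_t))·V^R` and `V^R ≥ V*`. -/
theorem stmt6
    (N T : ℕ) (hN : 1 ≤ N) (hT : 1 ≤ T) (J M : ℕ → ℝ) (U : ℕ → ℕ → ℝ)
    (hJ : ∀ i ∈ Finset.Icc 1 N, 0 < J i)
    (hM : ∀ t ∈ Finset.Icc 1 T, 0 < M t)
    (hUnn : ∀ i ∈ Finset.Icc 1 N, ∀ t ∈ Finset.Icc 1 T, 0 ≤ U i t)
    (hUmono : ∀ i ∈ Finset.Icc 1 N, ∀ t ∈ Finset.Icc 1 T, ∀ t', t ≤ t' → t' ≤ T →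
      U i t' ≤ U i t)
    (hU0 : ∀ i ∈ Finset.Icc 1 N, U i (T + 1) = 0)
    (VR Vstar : ℝ)
    (hVR : IsGreatest {v | ∃ x, LPFeasible N T J M x ∧ v = LPObj N T J U x} VR)
    (hVstar : IsGreatest
      {v | ∃ x y, ILPFeasible N T J M x y ∧ v = ILPObj N T U y} Vstar) :
    (1 - (T : ℝ) *
        ((Finset.Icc 1 N).sup' (Finset.nonempty_Icc.mpr hN) J) /
        ((Finset.Icc 1 T).inf' (Finset.nonempty_Icc.mpr hT) M)) * VR ≤ Vstar ∧
    Vstar ≤ VR := by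
  classical
  set Jmx : ℝ := (Finset.Icc 1 N).sup' (Finset.nonempty_Icc.mpr hN) J with hJmxdef
  set Mmn : ℝ := (Finset.Icc 1 T).inf' (Finset.nonempty_Icc.mpr hT) M with hMmndef
  have h1N : 1 ∈ Icc 1 N := mem_Icc.mpr ⟨le_refl 1, hN⟩
  have hJmxpos : 0 < Jmx := lt_of_lt_of_le (hJ 1 h1N) (Finset.le_sup' J h1N)
  have hMmnpos : 0 < Mmn := by
    obtain ⟨t0, ht0, heq⟩ := Finset.exists_mem_eq_inf' (Finset.nonempty_Icc.mpr hT) M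
    rw [hMmndef, heq]; exact hM t0 ht0
  have hJle : ∀ i ∈ Icc 1 N, J i ≤ Jmx := fun i hi => Finset.le_sup' J hi
  have hMge : ∀ t ∈ Icc 1 T, Mmn ≤ M t := fun t ht => Finset.inf'_le M ht
  set c : ℝ := (T : ℝ) * Jmx / Mmn with hcdef
  have hcnn : 0 ≤ c := by
    apply div_nonneg _ (le_of_lt hMmnpos)
    positivity
  -- Part 2: Vstar ≤ VR
  have hpart2 : Vstar ≤ VR := by
    obtain ⟨x, y, hf, hv⟩ := hVstar.1
    obtain ⟨x', hx', hle⟩ := partA N T J M U hJ hUnn hUmono hU0 x y hf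
    rw [hv]
    exact le_trans hle (hVR.2 ⟨x', hx', rfl⟩)
  -- nonnegativity of VR and Vstar
  have hVR0 : 0 ≤ VR := by
    apply hVR.2
    refine ⟨fun _ _ => 0, ⟨fun _ _ => le_refl 0, ?_, ?_⟩, by simp [LPObj]⟩
    · intro i hi; rw [Finset.sum_const_zero]; exact le_of_lt (hJ i hi)
    · intro t ht; rw [Finset.sum_const_zero]; exact le_of_lt (hM t ht)
  have hVstar0 : 0 ≤ Vstar := by
    apply hVstar.2
    refine ⟨fun _ _ => 0, fun _ _ => 0, ⟨fun _ _ => le_refl 0, fun _ _ _ _ => Or.inl rfl,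
      ?_, ?_⟩, by simp [ILPObj]⟩
    · intro i hi t ht
      rw [Finset.sum_const_zero, zero_div]
    · intro t ht; rw [Finset.sum_const_zero]; exact le_of_lt (hM t ht)
  refine ⟨?_, hpart2⟩
  by_cases hc : 1 ≤ c
  · have h1 : 1 - c ≤ 0 := by linarith
    nlinarith
  -- main case
  push_neg at hc
  have hTJmx : (T:ℝ) * Jmx < Mmn := by
    rw [hcdef] at hc
    exact (div_lt_one hMmnpos).mp hc
  have hM'nn : ∀ t ∈ Icc 1 T, 0 ≤ (fun t => M t - (T:ℝ) * Jmx) t := by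
    intro t ht
    have := hMge t ht
    dsimp only
    linarith
  obtain ⟨xs, ⟨hxsfeas, hxszero⟩, hvalmax, hnsqmax⟩ :=
    exists_opt N T hT J (fun t => M t - (T:ℝ) * Jmx) U (fun i hi => le_of_lt (hJ i hi)) hM'nn
  have hcard := fewProblem N T J (fun t => M t - (T:ℝ) * Jmx) U xs hxsfeas hxszero hvalmax hnsqmax
  obtain ⟨xI, yI, hILP, hobj⟩ := rounding N T J M U Jmx hJ hJle (le_of_lt hJmxpos)
    hUnn hUmono hU0 xs hxsfeas hcard
  have hVstarge : ILPObj N T U yI ≤ Vstar := hVstar.2 ⟨xI, yI, hILP, rfl⟩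
  -- scaled optimal LP solution
  obtain ⟨xR, hxRfeas, hVReq⟩ := hVR.1
  obtain ⟨hxR0, hxRrow, hxRcap⟩ := hxRfeas
  set z : ℕ → ℕ → ℝ := fun i t =>
    if i ∈ Icc 1 N ∧ t ∈ Icc 1 T then (1 - c) * xR i t else 0 with hzdef
  have h1c : 0 ≤ 1 - c := by linarith
  have hzfeas : LPFeasible N T J (fun t => M t - (T:ℝ) * Jmx) z := by
    refine ⟨?_, ?_, ?_⟩
    · intro i t
      rw [hzdef]; dsimp only
      split_ifs with h
      · exact mul_nonneg h1c (hxR0 i t)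
      · exact le_refl 0
    · intro i hi
      have : ∑ t ∈ Icc 1 T, z i t = (1 - c) * ∑ t ∈ Icc 1 T, xR i t := by
        rw [Finset.mul_sum]
        apply Finset.sum_congr rfl
        intro t ht
        rw [hzdef]; dsimp only; rw [if_pos ⟨hi, ht⟩]
      rw [this]
      have hs0 : 0 ≤ ∑ t ∈ Icc 1 T, xR i t := Finset.sum_nonneg fun t _ => hxR0 i t
      calc (1 - c) * ∑ t ∈ Icc 1 T, xR i t ≤ ∑ t ∈ Icc 1 T, xR i t :=
            mul_le_of_le_one_left hs0 (by linarith)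
        _ ≤ J i := hxRrow i hi
    · intro t ht
      have hzs : ∑ i ∈ Icc 1 N, z i t = (1 - c) * ∑ i ∈ Icc 1 N, xR i t := by
        rw [Finset.mul_sum]
        apply Finset.sum_congr rfl
        intro i hi
        rw [hzdef]; dsimp only; rw [if_pos ⟨hi, ht⟩]
      rw [hzs]
      dsimp only
      have h2 : (1 - c) * ∑ i ∈ Icc 1 N, xR i t ≤ (1 - c) * M t :=
        mul_le_mul_of_nonneg_left (hxRcap t ht) h1c
      have h3 : (T:ℝ) * Jmx ≤ c * M t := by
        have h4 : c * Mmn ≤ c * M t := mul_le_mul_of_nonneg_left (hMge t ht) hcnn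
        have h5 : c * Mmn = (T:ℝ) * Jmx := by
          rw [hcdef]; field_simp
        linarith
      nlinarith [hM t ht]
  have hzzero : ∀ i t, ¬(i ∈ Icc 1 N ∧ t ∈ Icc 1 T) → z i t = 0 := by
    intro i t h
    rw [hzdef]; dsimp only; rw [if_neg h]
  have hzval : LPObj N T J U z = (1 - c) * LPObj N T J U xR := by
    rw [LPObj, LPObj, Finset.mul_sum]
    apply Finset.sum_congr rfl
    intro i hi
    rw [Finset.mul_sum]
    apply Finset.sum_congr rfl
    intro t ht
    rw [hzdef]; dsimp only; rw [if_pos ⟨hi, ht⟩]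
    ring
  have hchain : (1 - c) * VR ≤ LPObj N T J U xs := by
    have := hvalmax z hzfeas hzzero
    rw [hzval] at this
    rw [hVReq]
    exact this
  calc (1 - c) * VR ≤ LPObj N T J U xs := hchain
    _ ≤ ILPObj N T U yI := hobj
    _ ≤ Vstar := hVstarge
end

section
/- (Exchange inequality at SYS-LP optima.) Let x be an optimal allocation for SYS-LP. Suppose there are tiers m < n and users i ≠ j such that x_{i,m} > 0, x_{i,n} > 0, and x_{j,m} > 0. Then F_{j,m} − F_{j,n} ≥ F_{i,m} − F_{i,n}. -/
open Finset

lemma sum_pair (s : Finset ℕ) {m n : ℕ} (hm : m ∈ s) (hn : n ∈ s) (g : ℕ → ℝ) :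
    ∑ b ∈ s, ((if b = m then (1:ℝ) else 0) - if b = n then 1 else 0) * g b = g m - g n := by
  have key : ∀ b, ((if b = m then (1:ℝ) else 0) - if b = n then 1 else 0) * g b
      = (if b = m then g b else 0) - (if b = n then g b else 0) := by
    intro b; split_ifs <;> ring
  rw [Finset.sum_congr rfl (fun b _ => key b), Finset.sum_sub_distrib,
    Finset.sum_ite_eq' s m g, Finset.sum_ite_eq' s n g, if_pos hm, if_pos hn]

/-- exchange inequality at SYS-LP optima: if `x` is optimal for SYS-LP,
`m < n` are tiers, `i ≠ j` are users with `x_{i,m} > 0`, `x_{i,n} > 0` and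
`x_{j,m} > 0`, then `F_{j,m} − F_{j,n} ≥ F_{i,m} − F_{i,n}`. -/
theorem stmt8
    (N T : ℕ) (J M : ℕ → ℝ) (U : ℕ → ℕ → ℝ)
    (hJ : ∀ i ∈ Finset.Icc 1 N, 0 < J i)
    (hM : ∀ t ∈ Finset.Icc 1 T, 0 < M t)
    (hUnn : ∀ i ∈ Finset.Icc 1 N, ∀ t ∈ Finset.Icc 1 T, 0 ≤ U i t)
    (hUmono : ∀ i ∈ Finset.Icc 1 N, ∀ t ∈ Finset.Icc 1 T, ∀ t', t ≤ t' → t' ≤ T →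
      U i t' ≤ U i t)
    (x : ℕ → ℕ → ℝ)
    (hfeas : LPFeasible N T J M x)
    (hopt : ∀ x', LPFeasible N T J M x' → LPObj N T J U x' ≤ LPObj N T J U x)
    (m n : ℕ) (hm : m ∈ Finset.Icc 1 T) (hn : n ∈ Finset.Icc 1 T) (hmn : m < n)
    (i j : ℕ) (hi : i ∈ Finset.Icc 1 N) (hj : j ∈ Finset.Icc 1 N) (hij : i ≠ j)
    (hxim : 0 < x i m) (hxin : 0 < x i n) (hxjm : 0 < x j m) :
    U i m / J i - U i n / J i ≤ U j m / J j - U j n / J j := by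
  by_contra hcon
  push_neg at hcon
  set ε : ℝ := min (x i n) (x j m) with hεdef
  have hε : 0 < ε := lt_min hxin hxjm
  have hε1 : ε ≤ x i n := min_le_left _ _
  have hε2 : ε ≤ x j m := min_le_right _ _
  set c : ℕ → ℕ → ℝ := fun a b =>
    ((if a = i then (1:ℝ) else 0) - if a = j then 1 else 0) *
    ((if b = m then (1:ℝ) else 0) - if b = n then 1 else 0) with hcdef
  set x' : ℕ → ℕ → ℝ := fun a b => x a b + ε * c a b with hx'def
  obtain ⟨hnn, hrow, hcol⟩ := hfeas
  -- feasibility of x'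
  have hfeas' : LPFeasible N T J M x' := by
    refine ⟨?_, ?_, ?_⟩
    · intro a b
      have h0 := hnn a b
      simp only [hx'def, hcdef]
      split_ifs with h1 h2 h3 h4 h3 h4 h3 h4 <;> subst_vars <;>
        first
        | (exact absurd rfl hij)
        | (exact absurd rfl (hij.symm))
        | (exact absurd rfl (hmn.ne))
        | (exact absurd rfl (hmn.ne'))
        | linarith
    · intro a ha
      have hz : ∑ t ∈ Finset.Icc 1 T, ε * c a t = 0 := by
        simp only [hcdef]
        have : ∀ t, ε * (((if a = i then (1:ℝ) else 0) - if a = j then 1 else 0) *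
            (((if t = m then (1:ℝ) else 0) - if t = n then 1 else 0)))
            = (ε * ((if a = i then (1:ℝ) else 0) - if a = j then 1 else 0)) *
              ((((if t = m then (1:ℝ) else 0) - if t = n then 1 else 0)) * 1) := by
          intro t; ring
        rw [Finset.sum_congr rfl (fun t _ => this t), ← Finset.mul_sum,
          sum_pair _ hm hn (fun _ => (1:ℝ))]
        ring
      have : ∑ t ∈ Finset.Icc 1 T, x' a t = ∑ t ∈ Finset.Icc 1 T, x a t := by
        simp only [hx'def, Finset.sum_add_distrib, hz, add_zero]
      rw [this]; exact hrow a ha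
    · intro t ht
      have hz : ∑ a ∈ Finset.Icc 1 N, ε * c a t = 0 := by
        simp only [hcdef]
        have : ∀ a, ε * (((if a = i then (1:ℝ) else 0) - if a = j then 1 else 0) *
            (((if t = m then (1:ℝ) else 0) - if t = n then 1 else 0)))
            = (ε * ((if t = m then (1:ℝ) else 0) - if t = n then 1 else 0)) *
              ((((if a = i then (1:ℝ) else 0) - if a = j then 1 else 0)) * 1) := by
          intro a; ring
        rw [Finset.sum_congr rfl (fun a _ => this a), ← Finset.mul_sum,
          sum_pair _ hi hj (fun _ => (1:ℝ))]
        ring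
      have : ∑ a ∈ Finset.Icc 1 N, x' a t = ∑ a ∈ Finset.Icc 1 N, x a t := by
        simp only [hx'def, Finset.sum_add_distrib, hz, add_zero]
      rw [this]; exact hcol t ht
  -- objective increase
  have hobj : LPObj N T J U x' = LPObj N T J U x +
      ε * ((U i m / J i - U i n / J i) - (U j m / J j - U j n / J j)) := by
    simp only [LPObj, hx'def]
    have expand : ∀ a b, (x a b + ε * c a b) * (U a b / J a)
        = x a b * (U a b / J a) + ε * (c a b * (U a b / J a)) := by intro a b; ring
    rw [Finset.sum_congr rfl (fun a _ => Finset.sum_congr rfl (fun b _ => expand a b))]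
    simp only [Finset.sum_add_distrib, ← Finset.mul_sum]
    have inner : ∀ a, ∑ b ∈ Finset.Icc 1 T, c a b * (U a b / J a)
        = ((if a = i then (1:ℝ) else 0) - if a = j then 1 else 0) *
          (U a m / J a - U a n / J a) := by
      intro a
      simp only [hcdef]
      have : ∀ b, (((if a = i then (1:ℝ) else 0) - if a = j then 1 else 0) *
          ((if b = m then (1:ℝ) else 0) - if b = n then 1 else 0)) * (U a b / J a)
          = ((if a = i then (1:ℝ) else 0) - if a = j then 1 else 0) *
            (((if b = m then (1:ℝ) else 0) - if b = n then 1 else 0) * (U a b / J a)) := by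
        intro b; ring
      rw [Finset.sum_congr rfl (fun b _ => this b), ← Finset.mul_sum,
        sum_pair _ hm hn (fun b => U a b / J a)]
    congr 1
    rw [Finset.sum_congr rfl (fun a _ => inner a),
      sum_pair _ hi hj (fun a => U a m / J a - U a n / J a)]
  have := hopt x' hfeas'
  rw [hobj] at this
  nlinarith
end
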